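/- arXiv:math/0405467 — 8 statements merged into one kernel-verified Lean document; each statement's English description precedes it below -/
import Mathlib

section
/- Let τ : [0,1] → [0,1] be piecewise monotonic and let s > 0. Then τ is conjugate, via an increasing homeomorphism of [0,1], to a uniformly piecewise linear map with slopes ±s if and only if there exists a non-atomic Borel probability measure m on [0,1] with full support that is scaled by τ by the factor s. Moreover, when such a measure m exists, the conjugating homeomorphism can be chosen to be h(x) = m([0,x]) (with h(0) = 0), and this h pushes m forward to Lebesgue measure on [0,1]. -/
open Set MeasureTheory

noncomputable section

/-- The unit interval `[0,1]` as a subset of `ℝ`. -/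
def I01 : Set ℝ := Set.Icc 0 1

/-- `τ` is piecewise monotonic on `[0,1]`: there is a partition
`0 = a 0 < a 1 < ⋯ < a n = 1` such that `τ` is continuous and strictly
monotonic on each open interval `(a i, a (i+1))`. -/
def PiecewiseMonotonic (τ : ℝ → ℝ) : Prop :=
  ∃ n : ℕ, 0 < n ∧ ∃ a : ℕ → ℝ, a 0 = 0 ∧ a n = 1 ∧ (∀ i < n, a i < a (i + 1)) ∧
    ∀ i < n, ContinuousOn τ (Set.Ioo (a i) (a (i + 1))) ∧
      (StrictMonoOn τ (Set.Ioo (a i) (a (i + 1))) ∨ StrictAntiOn τ (Set.Ioo (a i) (a (i + 1))))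

/-- `τ` is uniformly piecewise linear with slopes `±s`. -/
def UniformlyPiecewiseLinear (τ : ℝ → ℝ) (s : ℝ) : Prop :=
  ∃ n : ℕ, 0 < n ∧ ∃ a : ℕ → ℝ, a 0 = 0 ∧ a n = 1 ∧ (∀ i < n, a i < a (i + 1)) ∧
    ∀ i < n, ∃ ε : ℝ, (ε = 1 ∨ ε = -1) ∧ ∃ d : ℝ,
      ∀ x ∈ Set.Ioo (a i) (a (i + 1)), τ x = ε * s * x + d

/-- The measure `m` is scaled by `τ` by the factor `s`. -/
def ScaledBy (τ : ℝ → ℝ) (m : Measure ℝ) (s : ℝ) : Prop :=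
  ∀ E : Set ℝ, E ⊆ I01 → MeasurableSet E → Set.InjOn τ E →
    m (τ '' E) = ENNReal.ofReal s * m E

/-- `m` is a Borel probability measure on `[0,1]`. -/
def ProbOnI (m : Measure ℝ) : Prop := IsProbabilityMeasure m ∧ m I01 = 1

/-- `m` has full support in `[0,1]`. -/
def FullSupportOnI (m : Measure ℝ) : Prop :=
  ∀ U : Set ℝ, IsOpen U → (U ∩ I01).Nonempty → 0 < m (U ∩ I01)

/-- `m` is non-atomic. -/
def NonAtomic (m : Measure ℝ) : Prop := ∀ x : ℝ, m {x} = 0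

/-- `h` is an increasing homeomorphism of `[0,1]` onto itself. -/
def IncSelfHomeoI (h : ℝ → ℝ) : Prop :=
  ContinuousOn h I01 ∧ StrictMonoOn h I01 ∧ h '' I01 = I01

/-- `h` is a homeomorphism of `[0,1]` onto itself. -/
def SelfHomeoI (h : ℝ → ℝ) : Prop :=
  ContinuousOn h I01 ∧ Set.BijOn h I01 I01

/-- `τ` is topologically transitive on `K`. -/
def TransitiveOn (τ : ℝ → ℝ) (K : Set ℝ) : Prop :=
  ∀ U V : Set ℝ, IsOpen U → IsOpen V → (U ∩ K).Nonempty → (V ∩ K).Nonempty →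
    ∃ n : ℕ, ((τ^[n] '' (U ∩ K)) ∩ (V ∩ K)).Nonempty

/-- `τ` is topologically mixing on `K`. -/
def MixingOn (τ : ℝ → ℝ) (K : Set ℝ) : Prop :=
  ∀ U V : Set ℝ, IsOpen U → IsOpen V → (U ∩ K).Nonempty → (V ∩ K).Nonempty →
    ∃ N : ℕ, ∀ n ≥ N, ((τ^[n] '' (U ∩ K)) ∩ (V ∩ K)).Nonempty

/-- `τ` is topologically exact on `K`. -/
def ExactOn (τ : ℝ → ℝ) (K : Set ℝ) : Prop :=
  ∀ U : Set ℝ, IsOpen U → (U ∩ K).Nonempty → ∃ n : ℕ, τ^[n] '' (U ∩ K) = K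

/-- `τ` is essentially injective: there are no two disjoint nondegenerate
intervals in `[0,1]` with the same image under `τ`. -/
def EssentiallyInjective (τ : ℝ → ℝ) : Prop :=
  ¬ ∃ a b c d : ℝ, a < b ∧ c < d ∧ Set.Icc a b ⊆ I01 ∧ Set.Icc c d ⊆ I01 ∧
    Disjoint (Set.Icc a b) (Set.Icc c d) ∧ τ '' Set.Icc a b = τ '' Set.Icc c d

/-- The restricted tent map with slopes `±s`. -/
def tent (s : ℝ) (x : ℝ) : ℝ :=
  if x ≤ 1 - 1 / s then 1 + s * (x - (1 - 1 / s)) else 1 - s * (x - (1 - 1 / s))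

/-- `τ` is unimodal. -/
def Unimodal (τ : ℝ → ℝ) : Prop :=
  ContinuousOn τ I01 ∧ ∃ c : ℝ, 0 < c ∧ c < 1 ∧
    StrictMonoOn τ (Set.Icc 0 c) ∧ StrictAntiOn τ (Set.Icc c 1)

/-!
If `h` conjugates `τ` to a map `T` with slopes `±s`, then Lebesgue measure is scaled by `T` by the
factor `s` (on each piece `T` is affine), so its pullback under `h` is a non-atomic, fully
supported probability measure scaled by `τ`. Conversely, for such a measure `m` the distribution
function `h x = m [0,x]` is continuous (no atoms) and strictly increasing on `[0,1]` (full
support), hence an increasing self-homeomorphism of `[0,1]` pushing `m` to Lebesgue measure. For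
`x ≤ x'` in an interval of monotonicity of `τ`, `τ` maps `[x, x']` onto the interval between `τ x`
and `τ x'`, so the scaling property reads `|h (τ x') - h (τ x)| = s (h x' - h x)`: the map
`h ∘ τ ∘ h⁻¹` is affine with slope `±s` on the image of each piece.
-/

open ProbabilityTheory Function
open scoped Pointwise

theorem measurableSet_I01 : MeasurableSet I01 := measurableSet_Icc

instance : IsProbabilityMeasure (volume.restrict I01) :=
  ⟨by simp [I01]⟩

theorem exists_Icc_subset_inter_I01 {U : Set ℝ} (hU : IsOpen U) (hne : (U ∩ I01).Nonempty) :
    ∃ p q, p < q ∧ Icc p q ⊆ U ∩ I01 := by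
  obtain ⟨z, hzU, hzI⟩ := hne
  have hzcl : z ∈ closure (Ioo (0 : ℝ) 1) := by rwa [closure_Ioo zero_ne_one]
  obtain ⟨w, hwU, hw⟩ := mem_closure_iff.1 hzcl U hU hzU
  obtain ⟨l, u, ⟨hlw, hwu⟩, hsub⟩ :=
    mem_nhds_iff_exists_Ioo_subset.1 ((hU.inter isOpen_Ioo).mem_nhds ⟨hwU, hw⟩)
  refine ⟨w, (w + u) / 2, by linarith, fun x hx => ?_⟩
  obtain ⟨hxU, hx0, hx1⟩ := hsub ⟨hlw.trans_le hx.1, by linarith [hx.2]⟩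
  exact ⟨hxU, hx0.le, hx1.le⟩

theorem Icc_diff_biUnion_Ioo_subset_image {α : Type*} [LinearOrder α] (a : ℕ → α) (n : ℕ) :
    Icc (a 0) (a n) \ ⋃ i ∈ Finset.range n, Ioo (a i) (a (i + 1)) ⊆ a '' Iic n := by
  induction n with
  | zero => simp
  | succ n ih =>
    rintro x ⟨⟨hx0, hxn⟩, hx⟩
    rw [Finset.range_add_one, Finset.set_biUnion_insert, mem_union, not_or] at hx
    rcases le_or_gt x (a n) with hle | hgt
    · obtain ⟨i, hi, rfl⟩ := ih ⟨⟨hx0, hle⟩, hx.2⟩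
      exact ⟨i, le_trans hi n.le_succ, rfl⟩
    · refine ⟨n + 1, mem_Iic.2 le_rfl, ?_⟩
      exact (hxn.eq_or_lt.resolve_right fun hlt => hx.1 ⟨hgt, hlt⟩).symm

theorem finite_diff_biUnion_Ioo {α : Type*} [LinearOrder α] {a : ℕ → α} {n : ℕ} {E : Set α}
    (hE : E ⊆ Icc (a 0) (a n)) :
    (E \ ⋃ i ∈ Finset.range n, Ioo (a i) (a (i + 1))).Finite :=
  ((finite_Iic n).image a).subset ((sdiff_subset_sdiff_left hE).trans
    (Icc_diff_biUnion_Ioo_subset_image a n))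

theorem pairwiseDisjoint_Ioo_of_lt_succ {α : Type*} [Preorder α] {a : ℕ → α} {n : ℕ}
    (hlt : ∀ i < n, a i < a (i + 1)) :
    (↑(Finset.range n) : Set ℕ).PairwiseDisjoint fun i => Ioo (a i) (a (i + 1)) := by
  have hmono : MonotoneOn a (Iic n) :=
    (strictMonoOn_Iic_of_lt_succ fun i hi => hlt i hi).monotoneOn
  intro i hi j hj hij
  simp only [Finset.coe_range, mem_Iio] at hi hj
  rcases hij.lt_or_gt with h | h
  · exact (Ioc_disjoint_Ioc_of_le (hmono (mem_Iic.2 (by omega)) (mem_Iic.2 hj.le) h)).mono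
      Ioo_subset_Ioc_self Ioo_subset_Ioc_self
  · exact (Ioc_disjoint_Ioc_of_le (hmono (mem_Iic.2 (by omega)) (mem_Iic.2 hi.le) h)).symm.mono
      Ioo_subset_Ioc_self Ioo_subset_Ioc_self

theorem mem_I01_of_partition {a : ℕ → ℝ} {n : ℕ} (h0 : a 0 = 0) (h1 : a n = 1)
    (hlt : ∀ i < n, a i < a (i + 1)) {i : ℕ} (hi : i ≤ n) : a i ∈ I01 := by
  have hmono : MonotoneOn a (Iic n) :=
    (strictMonoOn_Iic_of_lt_succ fun i hi => hlt i hi).monotoneOn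
  exact ⟨h0 ▸ hmono (mem_Iic.2 (Nat.zero_le n)) hi (Nat.zero_le i),
    h1 ▸ hmono hi (mem_Iic.2 le_rfl) hi⟩

theorem Real.volume_image_mul_add (c d : ℝ) (S : Set ℝ) :
    volume ((fun x => c * x + d) '' S) = ENNReal.ofReal |c| * volume S := by
  have : (fun x => c * x + d) '' S = (fun y => y + d) '' (c • S) := by
    rw [← image_smul, image_image]; rfl
  rw [this, image_add_right, measure_preimage_add_right, Measure.addHaar_smul, Module.finrank_self,
    pow_one]

theorem UniformlyPiecewiseLinear.scaledBy_volume {T : ℝ → ℝ} {s : ℝ}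
    (hT : UniformlyPiecewiseLinear T s) (hs : 0 < s) : ScaledBy T volume s := by
  intro E hE hEm hinj
  obtain ⟨n, -, a, h0, h1, hlt, haff⟩ := hT
  set U := ⋃ i ∈ Finset.range n, Ioo (a i) (a (i + 1))
  set P : ℕ → Set ℝ := fun i => E ∩ Ioo (a i) (a (i + 1))
  have hfin : (E \ U).Finite := finite_diff_biUnion_Ioo (by rwa [h0, h1])
  have hdecomp : E = (⋃ i ∈ Finset.range n, P i) ∪ E \ U := by
    rw [← inter_iUnion₂, inter_union_sdiff]
  have hP : (↑(Finset.range n) : Set ℕ).PairwiseDisjoint P :=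
    (pairwiseDisjoint_Ioo_of_lt_succ hlt).mono fun i => inter_subset_right
  have hTP : (↑(Finset.range n) : Set ℕ).PairwiseDisjoint fun i => T '' P i :=
    fun i hi j hj hij => (hP hi hj hij).image hinj inter_subset_left inter_subset_left
  have hpiece : ∀ i < n, MeasurableSet (T '' P i) ∧
      volume (T '' P i) = ENNReal.ofReal s * volume (P i) := by
    intro i hi
    obtain ⟨ε, hε, d, hd⟩ := haff i hi
    have hεs : ε * s ≠ 0 := by rcases hε with rfl | rfl <;> simp [hs.ne']
    have himg : T '' P i = (fun x => ε * s * x + d) '' P i :=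
      image_congr fun x hx => hd x hx.2
    refine ⟨himg ▸ (hEm.inter measurableSet_Ioo).image_of_continuousOn_injOn (by fun_prop)
      fun x _ y _ hxy => mul_left_cancel₀ hεs (add_right_cancel hxy), ?_⟩
    rw [himg, Real.volume_image_mul_add]
    rcases hε with rfl | rfl <;> simp [abs_of_pos hs]
  have hvolE : volume E = volume (⋃ i ∈ Finset.range n, P i) := by
    conv_lhs => rw [hdecomp]
    exact measure_congr (union_ae_eq_left_of_ae_eq_empty (ae_eq_empty.2 (hfin.measure_zero _)))
  have hvolTE : volume (T '' E) = volume (⋃ i ∈ Finset.range n, T '' P i) := by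
    conv_lhs => rw [hdecomp, image_union, image_iUnion₂]
    exact measure_congr (union_ae_eq_left_of_ae_eq_empty
      (ae_eq_empty.2 ((hfin.image T).measure_zero _)))
  calc volume (T '' E) = ∑ i ∈ Finset.range n, ENNReal.ofReal s * volume (P i) := by
        rw [hvolTE, measure_biUnion_finset hTP fun i hi => (hpiece i (Finset.mem_range.1 hi)).1]
        exact Finset.sum_congr rfl fun i hi => (hpiece i (Finset.mem_range.1 hi)).2
    _ = ENNReal.ofReal s * volume E := by
        rw [← Finset.mul_sum, hvolE,
          measure_biUnion_finset hP fun i _ => hEm.inter measurableSet_Ioo]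

theorem PiecewiseMonotonic.measurableSet_image {τ : ℝ → ℝ} (hτ : PiecewiseMonotonic τ)
    {E : Set ℝ} (hE : E ⊆ I01) (hEm : MeasurableSet E) (hinj : InjOn τ E) :
    MeasurableSet (τ '' E) := by
  obtain ⟨n, -, a, h0, h1, -, hpiece⟩ := hτ
  set U := ⋃ i ∈ Finset.range n, Ioo (a i) (a (i + 1))
  have hfin : (E \ U).Finite := finite_diff_biUnion_Ioo (by rwa [h0, h1])
  rw [← inter_union_sdiff E U, image_union, inter_iUnion₂, image_iUnion₂]
  refine .union (.biUnion (Finset.range n).countable_toSet fun i hi => ?_)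
    (hfin.image τ).measurableSet
  exact (hEm.inter measurableSet_Ioo).image_of_continuousOn_injOn
    ((hpiece i (Finset.mem_range.1 hi)).1.mono inter_subset_right) (hinj.mono inter_subset_left)

theorem IncSelfHomeoI.of_strictMonoOn {φ : ℝ → ℝ} (hc : ContinuousOn φ I01)
    (hm : StrictMonoOn φ I01) (h0 : φ 0 = 0) (h1 : φ 1 = 1) : IncSelfHomeoI φ :=
  ⟨hc, hm, by rw [I01, hc.image_Icc_of_monotoneOn zero_le_one hm.monotoneOn, h0, h1]⟩

def conjBy (φ τ : ℝ → ℝ) : ℝ → ℝ := φ ∘ τ ∘ invFunOn φ I01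

namespace IncSelfHomeoI

variable {φ : ℝ → ℝ} (hφ : IncSelfHomeoI φ) {τ : ℝ → ℝ}
include hφ

theorem bijOn : BijOn φ I01 I01 :=
  ⟨(mapsTo_image φ I01).mono_right hφ.2.2.subset, hφ.2.1.injOn, hφ.2.2.symm.subset⟩

theorem invOn_invFunOn : InvOn (invFunOn φ I01) φ I01 I01 :=
  hφ.bijOn.invOn_invFunOn

theorem mapsTo_invFunOn : MapsTo (invFunOn φ I01) I01 I01 :=
  hφ.bijOn.surjOn.mapsTo_invFunOn

theorem monotoneOn_invFunOn : MonotoneOn (invFunOn φ I01) I01 := fun y hy y' hy' hyy =>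
  (hφ.2.1.le_iff_le (hφ.mapsTo_invFunOn hy) (hφ.mapsTo_invFunOn hy')).1
    (by rwa [hφ.invOn_invFunOn.2 hy, hφ.invOn_invFunOn.2 hy'])

theorem mapsTo_invFunOn_Ioo {a b : ℝ} (ha : a ∈ I01) (hb : b ∈ I01) :
    MapsTo (invFunOn φ I01) (Ioo (φ a) (φ b)) (Ioo a b) := by
  intro y ⟨hay, hyb⟩
  have hy : y ∈ I01 :=
    ⟨(hφ.bijOn.mapsTo ha).1.trans hay.le, hyb.le.trans (hφ.bijOn.mapsTo hb).2⟩
  have hgy := hφ.mapsTo_invFunOn hy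
  rw [← hφ.invOn_invFunOn.2 hy] at hay hyb
  exact ⟨(hφ.2.1.lt_iff_lt ha hgy).1 hay, (hφ.2.1.lt_iff_lt hgy hb).1 hyb⟩

theorem eqOn_conjBy : EqOn (φ ∘ τ) (conjBy φ τ ∘ φ) I01 := fun x hx => by
  simp only [conjBy, comp_apply, hφ.invOn_invFunOn.1 hx]

theorem mapsTo_conjBy (hmaps : MapsTo τ I01 I01) : MapsTo (conjBy φ τ) I01 I01 :=
  hφ.bijOn.mapsTo.comp (hmaps.comp hφ.mapsTo_invFunOn)

end IncSelfHomeoI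

def pullbackVolume (φ : ℝ → ℝ) : Measure ℝ := (volume.restrict I01).map (invFunOn φ I01)

section PullbackVolume

variable {φ : ℝ → ℝ} (hφ : IncSelfHomeoI φ)
include hφ

theorem aemeasurable_invFunOn : AEMeasurable (invFunOn φ I01) (volume.restrict I01) :=
  aemeasurable_restrict_of_monotoneOn measurableSet_I01 hφ.monotoneOn_invFunOn

theorem pullbackVolume_apply {A : Set ℝ} (hA : MeasurableSet A) :
    pullbackVolume φ A = volume (φ '' (A ∩ I01)) := by
  rw [pullbackVolume, Measure.map_apply_of_aemeasurable (aemeasurable_invFunOn hφ) hA,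
    Measure.restrict_apply' measurableSet_I01, hφ.invOn_invFunOn.1.image_inter', hφ.2.2]

theorem probOnI_pullbackVolume : ProbOnI (pullbackVolume φ) := by
  refine ⟨Measure.isProbabilityMeasure_map (aemeasurable_invFunOn hφ), ?_⟩
  rw [pullbackVolume_apply hφ measurableSet_I01, inter_self, hφ.2.2]
  simp [I01]

theorem nonAtomic_pullbackVolume : NonAtomic (pullbackVolume φ) := fun x => by
  rw [pullbackVolume_apply hφ (measurableSet_singleton x)]
  exact measure_mono_null (image_mono inter_subset_left) (by simp)

theorem fullSupportOnI_pullbackVolume : FullSupportOnI (pullbackVolume φ) := by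
  intro U hU hne
  obtain ⟨p, q, hpq, hsub⟩ := exists_Icc_subset_inter_I01 hU hne
  have hI : Icc p q ⊆ I01 := hsub.trans inter_subset_right
  rw [pullbackVolume_apply hφ (hU.measurableSet.inter measurableSet_I01),
    inter_eq_left.2 inter_subset_right]
  calc 0 < volume (Icc (φ p) (φ q)) := by
        simpa using hφ.2.1 (hI ⟨le_rfl, hpq.le⟩) (hI ⟨hpq.le, le_rfl⟩) hpq
    _ = volume (φ '' Icc p q) := by
        rw [(hφ.1.mono hI).image_Icc_of_monotoneOn hpq.le (hφ.2.1.monotoneOn.mono hI)]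
    _ ≤ volume (φ '' (U ∩ I01)) := measure_mono (image_mono hsub)

theorem scaledBy_pullbackVolume {τ T : ℝ → ℝ} {s : ℝ} (hmaps : MapsTo τ I01 I01)
    (hτ : PiecewiseMonotonic τ) (hT : ScaledBy T volume s) (hconj : EqOn (φ ∘ τ) (T ∘ φ) I01) :
    ScaledBy τ (pullbackVolume φ) s := by
  intro E hE hEm hinj
  have hτE : τ '' E ⊆ I01 := (hmaps.mono_left hE).image_subset
  rw [pullbackVolume_apply hφ (hτ.measurableSet_image hE hEm hinj), pullbackVolume_apply hφ hEm,
    inter_eq_left.2 hτE, inter_eq_left.2 hE, ← image_comp, (hconj.mono hE).image_eq, image_comp]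
  refine hT _ ((hφ.bijOn.mapsTo.mono_left hE).image_subset)
    (hEm.image_of_continuousOn_injOn (hφ.1.mono hE) (hφ.2.1.injOn.mono hE)) ?_
  rintro _ ⟨x, hx, rfl⟩ _ ⟨x', hx', rfl⟩ hxx
  have hττ : φ (τ x) = φ (τ x') := (hconj (hE hx)).trans (hxx.trans (hconj (hE hx')).symm)
  rw [hinj hx hx' (hφ.2.1.injOn (hmaps (hE hx)) (hmaps (hE hx')) hττ)]

end PullbackVolume

theorem exists_eq_mul_add_of_sub_eq {f : ℝ → ℝ} {S : Set ℝ} {c : ℝ} (hS : S.Nonempty)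
    (h : ∀ y ∈ S, ∀ y' ∈ S, f y' - f y = c * (y' - y)) : ∃ d, ∀ y ∈ S, f y = c * y + d := by
  obtain ⟨y₀, hy₀⟩ := hS
  exact ⟨f y₀ - c * y₀, fun y hy => by linarith [h y₀ hy₀ y hy]⟩

theorem ScaledBy.measureReal_image {m : Measure ℝ} {τ : ℝ → ℝ} {s : ℝ} (hsc : ScaledBy τ m s)
    (hs : 0 ≤ s) {E : Set ℝ} (hE : E ⊆ I01) (hEm : MeasurableSet E) (hinj : InjOn τ E) :
    m.real (τ '' E) = s * m.real E := by
  rw [measureReal_def, hsc E hE hEm hinj, ENNReal.toReal_mul, ENNReal.toReal_ofReal hs,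
    measureReal_def]

theorem continuous_cdf (m : Measure ℝ) [IsProbabilityMeasure m] [NullSingletonClass m] :
    Continuous (cdf m) := by
  refine continuous_iff_continuousAt.2 fun x => ?_
  have hjump := (cdf m).measure_singleton x
  rw [measure_cdf, measure_singleton, eq_comm, ENNReal.ofReal_eq_zero, sub_nonpos] at hjump
  rw [(cdf m).mono.continuousAt_iff_leftLim_eq_rightLim, (cdf m).rightLim_eq]
  exact le_antisymm ((cdf m).mono.leftLim_le le_rfl) hjump

section Cdf

variable {m : Measure ℝ} [IsProbabilityMeasure m]

theorem measure_Iio_zero_of_I01 (hI : m I01 = 1) : m (Iio 0) = 0 :=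
  measure_mono_null (show Iio 0 ⊆ I01ᶜ from fun _ hx hxI => not_le.2 hx hxI.1)
    ((prob_compl_eq_zero_iff measurableSet_I01).2 hI)

theorem cdf_eq_toReal_measure_Icc (h : m (Iio 0) = 0) (x : ℝ) :
    cdf m x = (m (Icc 0 x)).toReal := by
  rw [cdf_eq_real, measureReal_def, ← Iic_inter_Ici, measure_inter_conull (by rwa [compl_Ici])]

theorem cdf_one (hI : m I01 = 1) : cdf m 1 = 1 := by
  rw [cdf_eq_toReal_measure_Icc (measure_Iio_zero_of_I01 hI), ← I01, hI, ENNReal.toReal_one]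

theorem strictMonoOn_cdf (hFS : FullSupportOnI m) : StrictMonoOn (cdf m) I01 := by
  intro x hx y hy hxy
  have hsub : Ioo x y ⊆ I01 := Ioo_subset_Icc_self.trans (Icc_subset_Icc hx.1 hy.2)
  have hpos := hFS (Ioo x y) isOpen_Ioo (by rwa [inter_eq_left.2 hsub, nonempty_Ioo])
  rw [inter_eq_left.2 hsub] at hpos
  have := (measure_mono Ioo_subset_Ioc_self).trans_lt' hpos
  rwa [← measure_cdf m, (cdf m).measure_Ioc, ENNReal.ofReal_pos, sub_pos] at this

variable [NullSingletonClass m]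

theorem cdf_zero (h : m (Iio 0) = 0) : cdf m 0 = 0 := by
  rw [cdf_eq_toReal_measure_Icc h, Icc_self, measure_singleton, ENNReal.toReal_zero]

theorem measureReal_Icc_eq_cdf_sub {a b : ℝ} (hab : a ≤ b) :
    m.real (Icc a b) = cdf m b - cdf m a := by
  rw [measureReal_def, ← measure_congr Ioc_ae_eq_Icc,
    ← ENNReal.toReal_ofReal (sub_nonneg.2 ((cdf m).mono hab)), ← (cdf m).measure_Ioc, measure_cdf]

theorem incSelfHomeoI_cdf (hI : m I01 = 1) (hFS : FullSupportOnI m) : IncSelfHomeoI (cdf m) :=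
  .of_strictMonoOn (continuous_cdf m).continuousOn (strictMonoOn_cdf hFS)
    (cdf_zero (measure_Iio_zero_of_I01 hI)) (cdf_one hI)

theorem measure_preimage_cdf_Iic (hI : m I01 = 1) (hFS : FullSupportOnI m) {t : ℝ}
    (ht : t ∈ I01) : m (cdf m ⁻¹' Iic t) = ENNReal.ofReal t := by
  have hF := incSelfHomeoI_cdf hI hFS
  obtain ⟨c, hc, rfl⟩ : t ∈ cdf m '' I01 := hF.2.2.symm ▸ ht
  have hpre : cdf m ⁻¹' Iic (cdf m c) ∩ I01 = Icc 0 c := by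
    ext x
    refine ⟨fun ⟨hxc, hx⟩ => ⟨hx.1, (hF.2.1.le_iff_le hx hc).1 hxc⟩,
      fun hx => ⟨(cdf m).mono hx.2, hx.1, hx.2.trans hc.2⟩⟩
  rw [← measure_inter_conull ((prob_compl_eq_zero_iff measurableSet_I01).2 hI), hpre,
    cdf_eq_toReal_measure_Icc (measure_Iio_zero_of_I01 hI), ENNReal.ofReal_toReal
    (measure_ne_top m _)]

theorem map_cdf_eq_volume_restrict_I01 (hI : m I01 = 1) (hFS : FullSupportOnI m) :
    m.map (cdf m) = volume.restrict I01 := by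
  have : IsProbabilityMeasure (m.map (cdf m)) :=
    Measure.isProbabilityMeasure_map (cdf m).mono.measurable.aemeasurable
  refine Measure.ext_of_Iic _ _ fun t => ?_
  rw [Measure.map_apply (cdf m).mono.measurable measurableSet_Iic,
    Measure.restrict_apply measurableSet_Iic]
  rcases lt_or_ge t 0 with ht0 | ht0
  · have h1 : cdf m ⁻¹' Iic t = ∅ :=
      eq_empty_of_forall_notMem fun x hx => (cdf_nonneg m x).not_gt (lt_of_le_of_lt hx ht0)
    have h2 : Iic t ∩ I01 = ∅ :=
      eq_empty_of_forall_notMem fun x hx => (hx.2.1.trans hx.1).not_gt ht0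
    rw [h1, h2, measure_empty, measure_empty]
  rcases le_or_gt t 1 with ht1 | ht1
  · have h2 : Iic t ∩ I01 = Icc 0 t := by
      ext x
      exact ⟨fun hx => ⟨hx.2.1, hx.1⟩, fun hx => ⟨hx.2, hx.1, hx.2.trans ht1⟩⟩
    rw [measure_preimage_cdf_Iic hI hFS ⟨ht0, ht1⟩, h2, Real.volume_Icc, sub_zero]
  · have h1 : cdf m ⁻¹' Iic t = univ :=
      eq_univ_of_forall fun x => (cdf_le_one m x).trans ht1.le
    rw [h1, measure_univ, inter_eq_right.2 fun x hx => hx.2.trans ht1.le]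
    simp [I01]

variable {τ : ℝ → ℝ} {s : ℝ}

theorem ScaledBy.exists_sign_cdf_comp_sub (hsc : ScaledBy τ m s) (hs : 0 ≤ s) {J : Set ℝ}
    (hJ : J ⊆ I01) (hJc : J.OrdConnected) (hτc : ContinuousOn τ J)
    (hτm : StrictMonoOn τ J ∨ StrictAntiOn τ J) :
    ∃ ε : ℝ, (ε = 1 ∨ ε = -1) ∧ ∀ x ∈ J, ∀ x' ∈ J,
      cdf m (τ x') - cdf m (τ x) = ε * s * (cdf m x' - cdf m x) := by
  suffices h : ∃ ε : ℝ, (ε = 1 ∨ ε = -1) ∧ ∀ x ∈ J, ∀ x' ∈ J, x ≤ x' →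
      cdf m (τ x') - cdf m (τ x) = ε * s * (cdf m x' - cdf m x) by
    obtain ⟨ε, hε, h⟩ := h
    refine ⟨ε, hε, fun x hx x' hx' => ?_⟩
    rcases le_total x x' with hxx | hxx
    exacts [h x hx x' hx' hxx, by linarith [h x' hx' x hx hxx]]
  have hscale : ∀ x ∈ J, ∀ x' ∈ J, x ≤ x' →
      m.real (τ '' Icc x x') = s * (cdf m x' - cdf m x) := fun x hx x' hx' hxx => by
    have hsub := hJc.out hx hx'
    rw [hsc.measureReal_image hs (hsub.trans hJ) measurableSet_Icc
      (hτm.elim (·.injOn.mono hsub) (·.injOn.mono hsub)), measureReal_Icc_eq_cdf_sub hxx]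
  rcases hτm with hmono | hanti
  · refine ⟨1, .inl rfl, fun x hx x' hx' hxx => ?_⟩
    have hsub := hJc.out hx hx'
    rw [one_mul, ← hscale x hx x' hx' hxx, (hτc.mono hsub).image_Icc_of_monotoneOn hxx
      (hmono.monotoneOn.mono hsub), measureReal_Icc_eq_cdf_sub (hmono.monotoneOn hx hx' hxx)]
  · refine ⟨-1, .inr rfl, fun x hx x' hx' hxx => ?_⟩
    have hsub := hJc.out hx hx'
    rw [neg_one_mul, neg_mul, ← hscale x hx x' hx' hxx,
      (hτc.mono hsub).image_Icc_of_antitoneOn hxx (hanti.antitoneOn.mono hsub),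
      measureReal_Icc_eq_cdf_sub (hanti.antitoneOn hx hx' hxx), neg_sub]

theorem uniformlyPiecewiseLinear_conjBy_cdf (hI : m I01 = 1) (hFS : FullSupportOnI m)
    (hsc : ScaledBy τ m s) (hs : 0 ≤ s) (hτ : PiecewiseMonotonic τ) :
    UniformlyPiecewiseLinear (conjBy (cdf m) τ) s := by
  obtain ⟨n, hn, a, h0, h1, hlt, hpiece⟩ := hτ
  have hF := incSelfHomeoI_cdf hI hFS
  have ha : ∀ i ≤ n, a i ∈ I01 := fun i hi => mem_I01_of_partition h0 h1 hlt hi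
  refine ⟨n, hn, cdf m ∘ a, ?_, ?_, fun i hi => hF.2.1 (ha i hi.le) (ha _ hi) (hlt i hi),
    fun i hi => ?_⟩
  · simp [h0, cdf_zero (measure_Iio_zero_of_I01 hI)]
  · simp [h1, cdf_one hI]
  obtain ⟨hc, hmono⟩ := hpiece i hi
  obtain ⟨ε, hε, hΔ⟩ := hsc.exists_sign_cdf_comp_sub hs
    (Ioo_subset_Icc_self.trans (Icc_subset_Icc (ha i hi.le).1 (ha _ hi).2)) ordConnected_Ioo hc
    hmono
  refine ⟨ε, hε, exists_eq_mul_add_of_sub_eq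
    (nonempty_Ioo.2 (hF.2.1 (ha i hi.le) (ha _ hi) (hlt i hi))) fun y hy y' hy' => ?_⟩
  have hg := hF.mapsTo_invFunOn_Ioo (ha i hi.le) (ha _ hi)
  have hmem : ∀ y ∈ Ioo (cdf m (a i)) (cdf m (a (i + 1))), y ∈ I01 := fun y hy =>
    ⟨(cdf_nonneg m _).trans hy.1.le, hy.2.le.trans (cdf_le_one m _)⟩
  simpa only [conjBy, comp_apply, hF.invOn_invFunOn.2 (hmem y hy),
    hF.invOn_invFunOn.2 (hmem y' hy')] using hΔ _ (hg hy) _ (hg hy')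

theorem exists_conj_uniformlyPiecewiseLinear_cdf (hmaps : MapsTo τ I01 I01)
    (hτ : PiecewiseMonotonic τ) (hs : 0 ≤ s) (hI : m I01 = 1) (hFS : FullSupportOnI m)
    (hsc : ScaledBy τ m s) :
    ∃ T : ℝ → ℝ, UniformlyPiecewiseLinear T s ∧ MapsTo T I01 I01 ∧
      EqOn (cdf m ∘ τ) (T ∘ cdf m) I01 :=
  ⟨conjBy (cdf m) τ, uniformlyPiecewiseLinear_conjBy_cdf hI hFS hsc hs hτ,
    (incSelfHomeoI_cdf hI hFS).mapsTo_conjBy hmaps, (incSelfHomeoI_cdf hI hFS).eqOn_conjBy⟩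

end Cdf

/-- A piecewise monotonic map `τ : [0,1] → [0,1]` is conjugate, via an
increasing homeomorphism of `[0,1]`, to a uniformly piecewise linear map with slopes `±s`
iff there is a non-atomic Borel probability measure on `[0,1]` with full support scaled by
`τ` by the factor `s`; moreover any such measure `m` yields the conjugacy
`h x = m [0,x]`, which pushes `m` forward to Lebesgue measure on `[0,1]`. -/
theorem stmt0 (τ : ℝ → ℝ) (hmaps : Set.MapsTo τ I01 I01) (hpm : PiecewiseMonotonic τ)
    (s : ℝ) (hs : 0 < s) :
    ((∃ h T : ℝ → ℝ, IncSelfHomeoI h ∧ UniformlyPiecewiseLinear T s ∧ Set.MapsTo T I01 I01 ∧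
        Set.EqOn (h ∘ τ) (T ∘ h) I01) ↔
      (∃ m : Measure ℝ, ProbOnI m ∧ NonAtomic m ∧ FullSupportOnI m ∧ ScaledBy τ m s)) ∧
    (∀ m : Measure ℝ, ProbOnI m → NonAtomic m → FullSupportOnI m → ScaledBy τ m s →
      IncSelfHomeoI (fun x => (m (Set.Icc 0 x)).toReal) ∧
      (∃ T : ℝ → ℝ, UniformlyPiecewiseLinear T s ∧ Set.MapsTo T I01 I01 ∧
        Set.EqOn ((fun x => (m (Set.Icc 0 x)).toReal) ∘ τ)
          (T ∘ fun x => (m (Set.Icc 0 x)).toReal) I01) ∧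
      Measure.map (fun x => (m (Set.Icc 0 x)).toReal) m = volume.restrict I01) := by
  refine ⟨⟨fun ⟨φ, T, hφ, hT, _, hconj⟩ => ⟨pullbackVolume φ, probOnI_pullbackVolume hφ,
    nonAtomic_pullbackVolume hφ, fullSupportOnI_pullbackVolume hφ,
    scaledBy_pullbackVolume hφ hmaps hpm (hT.scaledBy_volume hs) hconj⟩,
    fun ⟨m, ⟨_, hI⟩, hNA, hFS, hsc⟩ => ?_⟩, fun m ⟨_, hI⟩ hNA hFS hsc => ?_⟩
  · have : NullSingletonClass m := ⟨hNA⟩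
    exact ⟨cdf m, exists_conj_uniformlyPiecewiseLinear_cdf hmaps hpm hs.le hI hFS hsc |>.imp
      fun _ => And.intro (incSelfHomeoI_cdf hI hFS)⟩
  · have : NullSingletonClass m := ⟨hNA⟩
    rw [show (fun x => (m (Icc 0 x)).toReal) = cdf m from
      funext fun x => (cdf_eq_toReal_measure_Icc (measure_Iio_zero_of_I01 hI) x).symm]
    exact ⟨incSelfHomeoI_cdf hI hFS, exists_conj_uniformlyPiecewiseLinear_cdf hmaps hpm hs.le hI
      hFS hsc, map_cdf_eq_volume_restrict_I01 hI hFS⟩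
end
end

section
/- If τ : [0,1] → [0,1] is continuous and uniformly piecewise linear with slopes ±s for some s ≥ 1, then the topological entropy of τ equals log s. -/
open Set MeasureTheory

noncomputable section

/-!
A map that is continuous and affine with slopes `±s` off finitely many break points is
`s`-Lipschitz, so a grid of mesh `ε / sᵏ` is a `(k, ε)`-dynamical cover of `[0,1]`: `h ≤ log s`.

For the lower bound, `τⁿ` is again piecewise affine with slopes `±sⁿ`. Once `ε` is small compared
with the gaps between its break points, an `ε`-ball meets at most two pieces, so the part of the
ball mapped by `τⁿ` into a set `A` has measure at most `(2 / sⁿ) |A|`. A dynamical ball of length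
`nq` therefore has measure at most `(2 / sⁿ)^q`, any cover of `[0,1]` needs `(sⁿ / 2)^q` of them,
and `n h ≥ n log s - log 2` for every `n`.
-/

open Filter Metric Dynamics ExpGrowth
open scoped ENNReal NNReal

lemma EReal.coe_le_of_forall_nat_mul_sub_le {a b : ℝ} {x : EReal}
    (h : ∀ n : ℕ, 0 < n → ((n * a - b : ℝ) : EReal) ≤ n * x) : (a : EReal) ≤ x := by
  induction x using EReal.rec with
  | bot =>
    have h1 := h 1 one_pos
    simp only [Nat.cast_one, one_mul, le_bot_iff, EReal.coe_ne_bot] at h1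
  | top => exact le_top
  | coe t =>
    refine EReal.coe_le_coe_iff.2 (le_of_not_gt fun (hta : t < a) => ?_)
    obtain ⟨n, hn⟩ := exists_nat_gt (b / (a - t))
    have hle : ((n + 1 : ℕ) : ℝ) * a - b ≤ (n + 1 : ℕ) * t := by
      exact_mod_cast h (n + 1) n.succ_pos
    rw [div_lt_iff₀ (_root_.sub_pos.2 hta)] at hn
    push_cast at hle
    nlinarith

lemma Set.Finite.exists_pos_closedBall_inter_subsingleton {X : Type*} [MetricSpace X]
    {P : Set X} (hP : P.Finite) : ∃ ε > 0, ∀ z, (closedBall z ε ∩ P).Subsingleton := by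
  obtain ⟨C, hC, hsep⟩ := hP.relatively_discrete
  obtain ⟨r, -, hr, hrC⟩ := ENNReal.lt_iff_exists_real_btwn.1 hC
  have hr : 0 < r := ENNReal.ofReal_pos.1 hr
  refine ⟨r / 3, by positivity, fun z p hp q hq => by_contra fun hpq => ?_⟩
  have hrpq := hrC.trans_le (hsep p hp.2 q hq.2 hpq)
  rw [edist_dist, ENNReal.ofReal_lt_ofReal_iff (dist_pos.2 hpq)] at hrpq
  linarith [dist_triangle_right p q z, mem_closedBall.1 hp.1, mem_closedBall.1 hq.1]

lemma Dynamics.measure_le_coverMincard_mul {X : Type*} [MeasurableSpace X] (μ : Measure X)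
    (T : X → X) (F : Set X) (U : SetRel X X) (n : ℕ) {w : ℝ≥0∞} (hw : w ≠ 0)
    (hball : ∀ y, μ {x ∈ F | (x, y) ∈ dynEntourage T U n} ≤ w) :
    μ F ≤ coverMincard T F U n * w := by
  rcases eq_top_or_lt_top (coverMincard T F U n) with htop | hfin
  · simp [htop, ENNReal.top_mul hw]
  obtain ⟨t, ht, hcard⟩ := (coverMincard_finite_iff T F U n).1 hfin
  calc μ F ≤ μ (⋃ y ∈ t, {x ∈ F | (x, y) ∈ dynEntourage T U n}) := measure_mono fun x hx => by
        obtain ⟨y, hy, hxy⟩ := ht hx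
        exact mem_biUnion hy ⟨hx, hxy⟩
    _ ≤ ∑ y ∈ t, μ {x ∈ F | (x, y) ∈ dynEntourage T U n} := measure_biUnion_finset_le t _
    _ ≤ ∑ _y ∈ t, w := Finset.sum_le_sum fun y _ => hball y
    _ = coverMincard T F U n * w := by rw [Finset.sum_const, nsmul_eq_mul, ← hcard]; rfl

lemma LipschitzOnWith.iterate_of_mapsTo {X : Type*} [PseudoEMetricSpace X] {f : X → X}
    {K : ℝ≥0} {s : Set X} (hf : LipschitzOnWith K f s) (hs : MapsTo f s s) :
    ∀ n, LipschitzOnWith (K ^ n) f^[n] s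
  | 0 => by simpa using LipschitzWith.id.lipschitzOnWith
  | n + 1 => by
    rw [pow_succ, Function.iterate_succ]
    exact (hf.iterate_of_mapsTo hs n).comp hf hs

lemma exists_finset_unitInterval_cover {δ : ℝ} (hδ : 0 < δ) :
    ∃ t : Finset ℝ, ↑t ⊆ I01 ∧ (t.card : ℝ) ≤ 1 / δ + 1 ∧ ∀ y ∈ I01, ∃ x ∈ t, dist y x < δ := by
  set N := ⌊1 / δ⌋₊
  refine ⟨(Finset.range (N + 1)).image fun i : ℕ => i * δ, ?_, ?_, ?_⟩
  · simp only [Finset.coe_image, Finset.coe_range, image_subset_iff]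
    intro i hi
    refine ⟨by positivity, ?_⟩
    calc (i : ℝ) * δ ≤ N * δ := by gcongr; exact_mod_cast Nat.lt_succ_iff.1 hi
      _ ≤ 1 / δ * δ := by gcongr; exact Nat.floor_le (by positivity)
      _ = 1 := by field_simp
  · calc ((Finset.range (N + 1)).image fun i : ℕ => i * δ).card ≤ ((N + 1 : ℕ) : ℝ) := by
          exact_mod_cast Finset.card_image_le.trans (Finset.card_range _).le
      _ ≤ 1 / δ + 1 := by push_cast; gcongr; exact Nat.floor_le (by positivity)
  · intro y hy
    have hyδ : 0 ≤ y / δ := div_nonneg hy.1 hδ.le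
    refine ⟨⌊y / δ⌋₊ * δ, Finset.mem_image_of_mem _ (Finset.mem_range.2 (Nat.lt_succ_of_le
      (Nat.floor_mono (div_le_div_of_nonneg_right hy.2 hδ.le)))), ?_⟩
    have h1 : (⌊y / δ⌋₊ : ℝ) * δ ≤ y := (le_div_iff₀ hδ).1 (Nat.floor_le hyδ)
    have h2 : y < (⌊y / δ⌋₊ + 1 : ℝ) * δ := (div_lt_iff₀ hδ).1 (Nat.lt_floor_add_one _)
    rw [Real.dist_eq, abs_of_nonneg (sub_nonneg.2 h1)]
    linarith

lemma coverEntropy_le_log_of_lipschitzOnWith {τ : ℝ → ℝ} {K : ℝ≥0} (hK : 1 ≤ K)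
    (hτ : LipschitzOnWith K τ I01) (hmaps : MapsTo τ I01 I01) :
    coverEntropy τ I01 ≤ Real.log K := by
  rw [coverEntropy_eq_iSup_basis uniformity_basis_dist]
  refine iSup₂_le fun ε hε => ?_
  have hcard (k : ℕ) : (coverMincard τ I01 {p | dist p.1 p.2 < ε} k : ℝ≥0∞) ≤
      ENNReal.ofReal (1 / ε + 1) * (K : ℝ≥0∞) ^ k := by
    have hKk : (1 : ℝ) ≤ K ^ k := one_le_pow₀ (by exact_mod_cast hK)
    obtain ⟨t, htI, htcard, hcov⟩ :=
      exists_finset_unitInterval_cover (δ := ε / K ^ k) (by positivity)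
    have hdyn : IsDynCoverOf τ I01 {p | dist p.1 p.2 < ε} k t := by
      intro y hy
      obtain ⟨x, hx, hxy⟩ := hcov y hy
      refine ⟨x, hx, mem_dynEntourage.2 fun j hj => ?_⟩
      calc dist (τ^[j] y) (τ^[j] x) ≤ K ^ j * dist y x :=
            mod_cast (hτ.iterate_of_mapsTo hmaps j).dist_le_mul y hy x (htI hx)
        _ ≤ K ^ k * dist y x := by gcongr
        _ < K ^ k * (ε / K ^ k) := by gcongr
        _ = ε := by field_simp
    calc (coverMincard τ I01 {p | dist p.1 p.2 < ε} k : ℝ≥0∞) ≤ t.card :=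
          mod_cast hdyn.coverMincard_le_card
      _ ≤ ENNReal.ofReal ((1 / ε + 1) * K ^ k) := by
          rw [← ENNReal.ofReal_natCast]
          refine ENNReal.ofReal_le_ofReal (htcard.trans ?_)
          rw [one_div_div, add_mul, one_mul, one_div_mul_eq_div]
          linarith
      _ = ENNReal.ofReal (1 / ε + 1) * (K : ℝ≥0∞) ^ k := by
          rw [ENNReal.ofReal_mul (by positivity), ← ENNReal.ofReal_coe_nnreal,
            ENNReal.ofReal_pow K.coe_nonneg]
  calc coverEntropyEntourage τ I01 {p | dist p.1 p.2 < ε}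
      ≤ expGrowthSup fun k => (K : ℝ≥0∞) ^ k :=
        expGrowthSup_le_of_eventually_le ENNReal.ofReal_ne_top (Eventually.of_forall hcard)
    _ = Real.log K := by
        rw [expGrowthSup_pow, ← ENNReal.ofReal_coe_nnreal,
          ENNReal.log_ofReal_of_pos (by exact_mod_cast zero_lt_one.trans_le hK)]

lemma volume_I01 : volume I01 = 1 := by simp [I01]

lemma Finset.disjoint_uIcc_of_filter_lt_eq {P : Finset ℝ} {x y : ℝ} (hx : x ∉ P) (hy : y ∉ P)
    (h : P.filter (· < x) = P.filter (· < y)) : Disjoint (Set.uIcc x y) ↑P := by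
  refine Set.disjoint_right.2 fun p hp hpxy => ?_
  have hiff : p < x ↔ p < y := by simpa [Finset.mem_coe.1 hp] using Finset.ext_iff.1 h p
  have hpx : p ≠ x := fun h => hx (h ▸ hp)
  have hpy : p ≠ y := fun h => hy (h ▸ hp)
  rcases Set.mem_uIcc.1 hpxy with ⟨h1, h2⟩ | ⟨h1, h2⟩
  · exact (lt_of_le_of_ne h1 hpx.symm).not_gt (hiff.2 (lt_of_le_of_ne h2 hpy))
  · exact (lt_of_le_of_ne h1 hpy.symm).not_gt (hiff.1 (lt_of_le_of_ne h2 hpx))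

/-- Slopes `±S` off the break points `P`: the pieces are all order-connected subsets of `[0,1]`
avoiding `P`, so the partition never has to be enumerated. -/
def PiecewiseAffine (σ : ℝ → ℝ) (S : ℝ) (P : Finset ℝ) : Prop :=
  ∀ T ⊆ I01, T.OrdConnected → Disjoint T ↑P → ∃ a e : ℝ, |a| = S ∧ EqOn σ (fun x ↦ a * x + e) T

namespace PiecewiseAffine

variable {σ τ : ℝ → ℝ} {S s : ℝ} {P Q : Finset ℝ}

lemma of_uniformlyPiecewiseLinear (h : UniformlyPiecewiseLinear τ s) (hs : 0 ≤ s) :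
    ∃ P, PiecewiseAffine τ s P := by
  obtain ⟨n, -, a, ha0, han, -, haff⟩ := h
  refine ⟨(Finset.range (n + 1)).image a, fun T hTI hTo hTP => ?_⟩
  have haT : ∀ i ≤ n, a i ∉ T := fun i hi hiT => hTP.notMem_of_mem_left hiT
    (Finset.mem_image.2 ⟨i, Finset.mem_range.2 (Nat.lt_succ_of_le hi), rfl⟩)
  rcases T.eq_empty_or_nonempty with rfl | ⟨t, ht⟩
  · exact ⟨s, 0, abs_of_nonneg hs, eqOn_empty _ _⟩
  have htn : t < a n := by
    rw [han]; exact (hTI ht).2.lt_of_ne fun h => haT n le_rfl (by rwa [han, ← h])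
  have hex : ∃ j, t < a j := ⟨n, htn⟩
  have hj0 : Nat.find hex ≠ 0 := fun h => (hTI ht).1.not_gt (ha0 ▸ h ▸ Nat.find_spec hex)
  obtain ⟨i, hij⟩ := Nat.exists_eq_add_one_of_ne_zero hj0
  have hin : i < n := by have := Nat.find_min' hex htn; omega
  have hta : t < a (i + 1) := hij ▸ Nat.find_spec hex
  have hat : a i < t := (not_lt.1 (Nat.find_min hex (hij ▸ i.lt_succ_self))).lt_of_ne
    fun h => haT i hin.le (h ▸ ht)
  have hTsub : T ⊆ Ioo (a i) (a (i + 1)) := fun y hy => by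
    refine ⟨lt_of_not_ge fun hy' => haT i hin.le ?_, lt_of_not_ge fun hy' => haT (i + 1) hin ?_⟩
    · exact hTo.out hy ht ⟨hy', hat.le⟩
    · exact hTo.out ht hy ⟨hta.le, hy'⟩
  obtain ⟨ε, hε, d, hd⟩ := haff i hin
  refine ⟨ε * s, d, ?_, fun x hx => hd x (hTsub hx)⟩
  rcases hε with rfl | rfl <;> simp [abs_of_nonneg hs]

lemma injOn (h : PiecewiseAffine σ S P) (hS : S ≠ 0) {T : Set ℝ} (hTI : T ⊆ I01)
    (hTo : T.OrdConnected) (hTP : Disjoint T ↑P) : InjOn σ T := by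
  obtain ⟨a, e, ha, hae⟩ := h T hTI hTo hTP
  have ha0 : a ≠ 0 := by rintro rfl; exact hS (by simpa using ha.symm)
  intro x hx y hy hxy
  rw [hae hx, hae hy] at hxy
  exact mul_left_cancel₀ ha0 (add_right_cancel hxy)

lemma finite_inter_preimage (h : PiecewiseAffine σ S P) (hS : S ≠ 0) {B : Set ℝ}
    (hB : B.Finite) : (I01 ∩ σ ⁻¹' B).Finite := by
  classical
  -- Points off `P` with the same position relative to `P` lie in one piece, where `σ` is injective.
  refine Set.Finite.of_sdiff ?_ P.finite_toSet
  have hmaps : MapsTo (fun x => (σ x, P.filter (· < x))) ((I01 ∩ σ ⁻¹' B) \ ↑P)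
      (B ×ˢ ↑P.powerset) := fun x hx =>
    ⟨hx.1.2, Finset.mem_coe.2 (Finset.mem_powerset.2 (Finset.filter_subset _ _))⟩
  refine Set.Finite.of_injOn hmaps ?_ (hB.prod (Finset.finite_toSet _))
  intro x hx y hy hxy
  simp only [Prod.mk.injEq] at hxy
  have hdisj := Finset.disjoint_uIcc_of_filter_lt_eq hx.2 hy.2 hxy.2
  exact h.injOn hS (ordConnected_Icc.uIcc_subset hx.1.1 hy.1.1) ordConnected_uIcc hdisj
    left_mem_uIcc right_mem_uIcc hxy.1

lemma comp (hσ : PiecewiseAffine σ S P) (hτ : PiecewiseAffine τ s Q) (hS : S ≠ 0)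
    (hmaps : MapsTo σ I01 I01) : ∃ R, PiecewiseAffine (τ ∘ σ) (s * S) R := by
  classical
  have hfin := hσ.finite_inter_preimage hS Q.finite_toSet
  refine ⟨P ∪ hfin.toFinset, fun T hTI hTo hTR => ?_⟩
  rw [Finset.coe_union, Set.Finite.coe_toFinset, disjoint_union_right] at hTR
  obtain ⟨a, e, ha, hae⟩ := hσ T hTI hTo hTR.1
  have hσT : (σ '' T).OrdConnected := by
    rw [hae.image_eq]
    exact (hTo.isPreconnected.image _ (by fun_prop)).ordConnected
  have hσTQ : Disjoint (σ '' T) ↑Q := by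
    rintro U hU hUQ y hy
    obtain ⟨x, hx, rfl⟩ := hU hy
    exact Set.disjoint_left.1 hTR.2 hx ⟨hTI hx, hUQ hy⟩
  obtain ⟨a', e', ha', hae'⟩ := hτ (σ '' T) (hmaps.mono_left hTI).image_subset hσT hσTQ
  refine ⟨a' * a, a' * e + e', by rw [abs_mul, ha, ha'], fun x hx => ?_⟩
  rw [Function.comp_apply, hae' (mem_image_of_mem σ hx), hae hx]
  ring

lemma iterate (h : PiecewiseAffine τ s P) (hs : s ≠ 0) (hmaps : MapsTo τ I01 I01) :
    ∀ n : ℕ, ∃ R, PiecewiseAffine τ^[n] (s ^ n) R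
  | 0 => ⟨∅, fun _ _ _ _ => ⟨1, 0, by simp, fun x _ => by simp⟩⟩
  | n + 1 => by
    obtain ⟨R, hR⟩ := h.iterate hs hmaps n
    rw [Function.iterate_succ, pow_succ]
    exact h.comp hR hs hmaps

lemma dist_le_of_disjoint_Ioo (h : PiecewiseAffine σ S P) (hc : ContinuousOn σ I01) {x y : ℝ}
    (hx : x ∈ I01) (hy : y ∈ I01) (hxy : x ≤ y) (hP : Disjoint (Ioo x y) ↑P) :
    dist (σ x) (σ y) ≤ S * dist x y := by
  rcases hxy.eq_or_lt with rfl | hlt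
  · simp
  have hsub : Icc x y ⊆ I01 := Icc_subset_Icc hx.1 hy.2
  obtain ⟨a, e, rfl, hae⟩ := h (Ioo x y) (Ioo_subset_Icc_self.trans hsub) ordConnected_Ioo hP
  have hae' : EqOn σ (fun z => a * z + e) (Icc x y) :=
    hae.of_subset_closure (hc.mono hsub) (by fun_prop) Ioo_subset_Icc_self (closure_Ioo hlt.ne).ge
  rw [hae' (left_mem_Icc.2 hxy), hae' (right_mem_Icc.2 hxy), Real.dist_eq, Real.dist_eq,
    ← abs_mul]
  exact le_of_eq (by ring_nf)

lemma dist_le (h : PiecewiseAffine σ S P) (hc : ContinuousOn σ I01) {x y : ℝ} (hx : x ∈ I01)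
    (hy : y ∈ I01) : dist (σ x) (σ y) ≤ S * dist x y := by
  suffices key : ∀ R : Finset ℝ, ∀ x ∈ I01, ∀ y ∈ I01, x ≤ y → ↑P ∩ Ioo x y ⊆ ↑R →
      dist (σ x) (σ y) ≤ S * dist x y by
    rcases le_total x y with hxy | hyx
    · exact key P x hx y hy hxy inter_subset_left
    · rw [dist_comm, dist_comm x]
      exact key P y hy x hx hyx inter_subset_left
  intro R
  induction R using Finset.induction_on with
  | empty =>
    exact fun x hx y hy hxy hR => h.dist_le_of_disjoint_Ioo hc hx hy hxy
      (disjoint_left.2 fun z hz hzP => by simpa using hR ⟨hzP, hz⟩)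
  | insert p R _ ih =>
    intro x hx y hy hxy hR
    have hR' : ∀ {u v}, x ≤ u → v ≤ y → p ∉ Ioo u v → ↑P ∩ Ioo u v ⊆ ↑R :=
      fun hxu hvy hp z hz => by
        have hzR := hR ⟨hz.1, hxu.trans_lt hz.2.1, hz.2.2.trans_le hvy⟩
        rw [Finset.coe_insert, mem_insert_iff] at hzR
        exact hzR.resolve_left fun hzp => hp (hzp ▸ hz.2)
    by_cases hp : p ∈ Ioo x y
    · have hpI : p ∈ I01 := ⟨hx.1.trans hp.1.le, hp.2.le.trans hy.2⟩
      have h1 := ih x hx p hpI hp.1.le (hR' le_rfl hp.2.le fun h => lt_irrefl p h.2)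
      have h2 := ih p hpI y hy hp.2.le (hR' hp.1.le le_rfl fun h => lt_irrefl p h.1)
      have hsplit : dist x p + dist p y = dist x y := by
        simp only [Real.dist_eq]
        rw [abs_of_nonpos, abs_of_nonpos, abs_of_nonpos] <;> linarith [hp.1, hp.2]
      calc dist (σ x) (σ y) ≤ dist (σ x) (σ p) + dist (σ p) (σ y) := dist_triangle _ _ _
        _ ≤ S * dist x p + S * dist p y := add_le_add h1 h2
        _ = S * dist x y := by rw [← mul_add, hsplit]
    · exact ih x hx y hy hxy (hR' le_rfl le_rfl hp)

lemma lipschitzOnWith (h : PiecewiseAffine σ S P) (hc : ContinuousOn σ I01) :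
    LipschitzOnWith S.toNNReal σ I01 :=
  LipschitzOnWith.of_dist_le_mul fun x hx y hy =>
    (h.dist_le hc hx hy).trans (by gcongr; exact Real.le_coe_toNNReal S)

lemma volume_inter_preimage_le_of_disjoint (h : PiecewiseAffine σ S P) (hS : S ≠ 0) {T : Set ℝ}
    (hTI : T ⊆ I01) (hTo : T.OrdConnected) (hTP : Disjoint T ↑P) (B : Set ℝ) :
    volume (T ∩ σ ⁻¹' B) ≤ ENNReal.ofReal S⁻¹ * volume B := by
  obtain ⟨a, e, rfl, hae⟩ := h T hTI hTo hTP
  have ha0 : a ≠ 0 := abs_ne_zero.1 hS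
  calc volume (T ∩ σ ⁻¹' B) ≤ volume ((a * ·) ⁻¹' ((· + e) ⁻¹' B)) :=
        measure_mono fun x hx => by
          have hσx : σ x = a * x + e := hae hx.1
          rw [mem_preimage, mem_preimage, ← hσx]
          exact hx.2
    _ = ENNReal.ofReal |a|⁻¹ * volume B := by
        rw [Real.volume_preimage_mul_left ha0, measure_preimage_add_right, abs_inv]

lemma volume_inter_preimage_le (h : PiecewiseAffine σ S P) (hS : S ≠ 0) {T : Set ℝ}
    (hTI : T ⊆ I01) (hTo : T.OrdConnected) (hTP : (T ∩ ↑P).Subsingleton) (B : Set ℝ) :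
    volume (T ∩ σ ⁻¹' B) ≤ ENNReal.ofReal (2 / S) * volume B := by
  obtain ⟨p, hp⟩ : ∃ p, T ∩ ↑P ⊆ {p} := by
    rcases hTP.eq_empty_or_singleton with h | ⟨p, h⟩
    exacts [⟨0, h ▸ empty_subset _⟩, ⟨p, h.subset⟩]
  have hside : ∀ T' ⊆ T, T'.OrdConnected → p ∉ T' →
      volume (T' ∩ σ ⁻¹' B) ≤ ENNReal.ofReal S⁻¹ * volume B :=
    fun T' hT' hT'o hpT' => h.volume_inter_preimage_le_of_disjoint hS (hT'.trans hTI) hT'o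
      (disjoint_left.2 fun x hx hxP => hpT' (hp ⟨hT' hx, hxP⟩ ▸ hx)) B
  have hcover : T ∩ σ ⁻¹' B ⊆ T ∩ Iio p ∩ σ ⁻¹' B ∪ {p} ∪ T ∩ Ioi p ∩ σ ⁻¹' B := by
    rintro x ⟨hxT, hxB⟩
    rcases lt_trichotomy x p with hx | rfl | hx
    exacts [Or.inl (Or.inl ⟨⟨hxT, hx⟩, hxB⟩), Or.inl (Or.inr rfl), Or.inr ⟨⟨hxT, hx⟩, hxB⟩]
  calc volume (T ∩ σ ⁻¹' B)
      ≤ volume (T ∩ Iio p ∩ σ ⁻¹' B) + volume {p} + volume (T ∩ Ioi p ∩ σ ⁻¹' B) :=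
        (measure_mono hcover).trans
          ((measure_union_le _ _).trans (by gcongr; exact measure_union_le _ _))
    _ ≤ ENNReal.ofReal S⁻¹ * volume B + 0 + ENNReal.ofReal S⁻¹ * volume B := by
        gcongr
        · exact hside _ inter_subset_left (hTo.inter ordConnected_Iio) fun h => lt_irrefl p h.2
        · exact Real.volume_singleton.le
        · exact hside _ inter_subset_left (hTo.inter ordConnected_Ioi) fun h => lt_irrefl p h.2
    _ = ENNReal.ofReal (2 / S) * volume B := by
        rw [add_zero, ← add_mul, ← two_mul, div_eq_mul_inv, ENNReal.ofReal_mul zero_le_two,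
          ENNReal.ofReal_ofNat]

lemma volume_setOf_iterate_mem_closedBall_le (h : PiecewiseAffine σ S P) (hS : S ≠ 0)
    (hmaps : MapsTo σ I01 I01) {ε : ℝ} (hε : ∀ z, (closedBall z ε ∩ (P : Set ℝ)).Subsingleton)
    (q : ℕ) (z : ℕ → ℝ) :
    volume {y ∈ I01 | ∀ j < q, σ^[j] y ∈ closedBall (z j) ε} ≤ ENNReal.ofReal (2 / S) ^ q := by
  induction q generalizing z with
  | zero => simp [volume_I01]
  | succ q ih =>
    have hsub : {y ∈ I01 | ∀ j < q + 1, σ^[j] y ∈ closedBall (z j) ε} ⊆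
        I01 ∩ closedBall (z 0) ε ∩ σ ⁻¹' {y ∈ I01 | ∀ j < q, σ^[j] y ∈ closedBall (z (j + 1)) ε} :=
      fun y ⟨hy, hyz⟩ => ⟨⟨hy, hyz 0 q.succ_pos⟩, hmaps hy, fun j hj => hyz (j + 1) (by omega)⟩
    have hT : (I01 ∩ closedBall (z 0) ε).OrdConnected := by
      rw [Real.closedBall_eq_Icc]
      exact ordConnected_Icc.inter ordConnected_Icc
    calc volume {y ∈ I01 | ∀ j < q + 1, σ^[j] y ∈ closedBall (z j) ε}
        ≤ ENNReal.ofReal (2 / S) *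
            volume {y ∈ I01 | ∀ j < q, σ^[j] y ∈ closedBall (z (j + 1)) ε} :=
          (measure_mono hsub).trans (h.volume_inter_preimage_le hS inter_subset_left hT
            ((hε (z 0)).anti (inter_subset_inter_left _ inter_subset_right)) _)
      _ ≤ ENNReal.ofReal (2 / S) * ENNReal.ofReal (2 / S) ^ q := by gcongr; exact ih _
      _ = ENNReal.ofReal (2 / S) ^ (q + 1) := (pow_succ' _ _).symm

lemma ofReal_pow_le_coverMincard {n : ℕ} (h : PiecewiseAffine τ^[n] S P) (hn : 0 < n)
    (hS : 0 < S) (hmaps : MapsTo τ I01 I01) {ε : ℝ}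
    (hε : ∀ z, (closedBall z ε ∩ (P : Set ℝ)).Subsingleton) (q : ℕ) :
    ENNReal.ofReal (S / 2) ^ q ≤ coverMincard τ I01 {p | dist p.1 p.2 < ε} (n * q) := by
  set w := ENNReal.ofReal (2 / S) ^ q
  have hw : w ≠ 0 := pow_ne_zero _ (ENNReal.ofReal_pos.2 (by positivity)).ne'
  have hball (y : ℝ) :
      volume {x ∈ I01 | (x, y) ∈ dynEntourage τ {p | dist p.1 p.2 < ε} (n * q)} ≤ w := by
    refine (measure_mono ?_).trans (h.volume_setOf_iterate_mem_closedBall_le hS.ne'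
      (hmaps.iterate n) hε q fun j => (τ^[n])^[j] y)
    rintro x ⟨hx, hxy⟩
    refine ⟨hx, fun j hj => ?_⟩
    rw [← Function.iterate_mul, mem_closedBall]
    exact (mem_dynEntourage.1 hxy (n * j) (Nat.mul_lt_mul_of_pos_left hj hn)).le
  have key := measure_le_coverMincard_mul volume τ I01 {p | dist p.1 p.2 < ε} (n * q) hw hball
  rw [volume_I01] at key
  calc ENNReal.ofReal (S / 2) ^ q = w⁻¹ := by
        rw [ENNReal.inv_pow, ← ENNReal.ofReal_inv_of_pos (by positivity), inv_div]
    _ ≤ _ := (ENNReal.inv_le_iff_le_mul (fun _ => hw) fun h => absurd h (by simp [w])).2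
        (by rwa [mul_comm])

lemma log_le_coverEntropy (h : PiecewiseAffine τ s P) (hs : 0 < s) (hmaps : MapsTo τ I01 I01) :
    (Real.log s : EReal) ≤ coverEntropy τ I01 := by
  refine EReal.coe_le_of_forall_nat_mul_sub_le (b := Real.log 2) fun n hn => ?_
  obtain ⟨R, hR⟩ := h.iterate hs.ne' hmaps n
  obtain ⟨ε, hε, hsep⟩ := R.finite_toSet.exists_pos_closedBall_inter_subsingleton
  have hU : {p : ℝ × ℝ | dist p.1 p.2 < ε} ∈ uniformity ℝ := dist_mem_uniformity hε
  have hmono : Monotone fun k => (coverMincard τ I01 {p | dist p.1 p.2 < ε} k : ℝ≥0∞) :=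
    ENat.toENNReal_mono.comp (coverMincard_monotone_time _ _ _)
  calc ((n * Real.log s - Real.log 2 : ℝ) : EReal)
      = expGrowthSup fun q => ENNReal.ofReal (s ^ n / 2) ^ q := by
        rw [expGrowthSup_pow, ENNReal.log_ofReal_of_pos (by positivity),
          Real.log_div (by positivity) two_ne_zero, Real.log_pow]
    _ ≤ expGrowthSup fun q => (coverMincard τ I01 {p | dist p.1 p.2 < ε} (n * q) : ℝ≥0∞) :=
        expGrowthSup_monotone fun q =>
          hR.ofReal_pow_le_coverMincard hn (by positivity) hmaps hsep q
    _ = n * coverEntropyEntourage τ I01 {p | dist p.1 p.2 < ε} :=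
        hmono.expGrowthSup_comp_mul hn.ne'
    _ ≤ n * coverEntropy τ I01 :=
        mul_le_mul_of_nonneg_left (coverEntropyEntourage_le_coverEntropy τ I01 hU) (by positivity)

end PiecewiseAffine

/-- A continuous uniformly piecewise linear map of `[0,1]` with slopes `±s`,
`s ≥ 1`, has topological entropy `log s`. -/
theorem stmt1 (τ : ℝ → ℝ) (hmaps : Set.MapsTo τ I01 I01) (hc : ContinuousOn τ I01)
    (s : ℝ) (hs : 1 ≤ s) (hupl : UniformlyPiecewiseLinear τ s) :
    Dynamics.coverEntropy τ I01 = (Real.log s : EReal) := by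
  obtain ⟨P, hP⟩ := PiecewiseAffine.of_uniformlyPiecewiseLinear hupl (by linarith)
  refine le_antisymm ?_ (hP.log_le_coverEntropy (by linarith) hmaps)
  have hK : (1 : ℝ≥0) ≤ s.toNNReal := by simpa using hs
  simpa [Real.coe_toNNReal s (by linarith)] using
    coverEntropy_le_log_of_lipschitzOnWith hK (hP.lipschitzOnWith hc) hmaps
end
end

section
/- If τ : [0,1] → [0,1] is continuous, piecewise monotonic, topologically mixing, and not essentially injective, then τ is topologically exact. -/
open Set MeasureTheory

noncomputable section

/-!
Mixing makes the iterated images of an open interval `J` eventually contain every point of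
`(0,1)`, hence also every image of such a point; as these images are intervals, exactness can
only fail at an endpoint that is not eventually covered. All preimages of such an endpoint are
then uncovered endpoints, so some endpoint `p` is fixed by `τ` or `τ²` and has no other preimage.
Monotonicity near `p` then makes either a small one-sided neighbourhood of `p` or the complement
of one invariant, contradicting mixing. Reflecting `x ↦ 1 - x` reduces `p = 1` to `p = 0`.
-/

open Filter Topology

section Mixing

variable {f : ℝ → ℝ} {K : Set ℝ}

theorem MixingOn.iterate (hf : MixingOn f K) {j : ℕ} (hj : 0 < j) : MixingOn f^[j] K := by
  intro U V hU hV hUK hVK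
  obtain ⟨N, hN⟩ := hf U V hU hV hUK hVK
  refine ⟨N, fun n hn => ?_⟩
  rw [← Function.iterate_mul]
  exact hN _ (hn.trans (Nat.le_mul_of_pos_left n hj))

theorem MixingOn.inter_nonempty_of_mapsTo (hf : MixingOn f K) {U V S : Set ℝ} (hU : IsOpen U)
    (hV : IsOpen V) (hUK : (U ∩ K).Nonempty) (hVK : (V ∩ K).Nonempty) (hUS : U ∩ K ⊆ S)
    (hS : MapsTo f S S) : (S ∩ V).Nonempty := by
  obtain ⟨N, hN⟩ := hf U V hU hV hUK hVK
  obtain ⟨_, ⟨x, hx, rfl⟩, hV, -⟩ := hN N le_rfl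
  exact ⟨_, hS.iterate N (hUS hx), hV⟩

theorem MixingOn.surjOn (hf : MixingOn f K) (hmaps : MapsTo f K K) (hc : ContinuousOn f K)
    (hK : IsCompact K) : SurjOn f K K := by
  intro p hp
  by_contra hp'
  have hopen : IsOpen (f '' K)ᶜ := (hK.image_of_continuousOn hc).isClosed.isOpen_compl
  obtain ⟨N, hN⟩ := hf univ _ isOpen_univ hopen ⟨p, trivial, hp⟩ ⟨p, hp', hp⟩
  obtain ⟨_, ⟨x, hx, rfl⟩, hV, -⟩ := hN (N + 1) N.le_succ
  rw [Function.iterate_succ_apply'] at hV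
  exact hV (mem_image_of_mem f (hmaps.iterate N hx.2))

theorem MixingOn.eventually_mem_image_iterate (hf : MixingOn f K) (hmaps : MapsTo f K K)
    (hc : ContinuousOn f K) {u v : ℝ} (huv : u < v) (hJ : Ioo u v ⊆ K) {y : ℝ}
    (hlo : (Iio y ∩ K).Nonempty) (hhi : (Ioi y ∩ K).Nonempty) :
    ∀ᶠ n in atTop, y ∈ f^[n] '' Ioo u v := by
  have hJK : Ioo u v ∩ K = Ioo u v := inter_eq_left.2 hJ
  obtain ⟨N₁, hN₁⟩ := hf _ _ isOpen_Ioo isOpen_Iio (hJK ▸ nonempty_Ioo.2 huv) hlo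
  obtain ⟨N₂, hN₂⟩ := hf _ _ isOpen_Ioo isOpen_Ioi (hJK ▸ nonempty_Ioo.2 huv) hhi
  rw [hJK] at hN₁ hN₂
  refine eventually_atTop.2 ⟨max N₁ N₂, fun n hn => ?_⟩
  obtain ⟨a, ha, hay, -⟩ := hN₁ n (le_of_max_le_left hn)
  obtain ⟨b, hb, hyb, -⟩ := hN₂ n (le_of_max_le_right hn)
  exact (isPreconnected_Ioo.image _ ((hc.iterate hmaps n).mono hJ)).Icc_subset ha hb
    ⟨le_of_lt hay, le_of_lt hyb⟩

theorem Filter.Eventually.apply_mem_image_iterate {α : Type*} {f : α → α} {J : Set α} {q : α}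
    (hq : ∀ᶠ n in atTop, q ∈ f^[n] '' J) : ∀ᶠ n in atTop, f q ∈ f^[n] '' J := by
  obtain ⟨N, hN⟩ := eventually_atTop.1 hq
  refine eventually_atTop.2 ⟨N + 1, fun n hn => ?_⟩
  obtain ⟨m, rfl⟩ : ∃ m, n = m + 1 := ⟨n - 1, by omega⟩
  rw [Function.iterate_succ', image_comp]
  exact mem_image_of_mem f (hN m (by omega))

end Mixing

lemma eq_zero_or_eq_one_or_mem_Ioo {y : ℝ} (hy : y ∈ I01) :
    y = 0 ∨ y = 1 ∨ y ∈ Ioo 0 1 := by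
  rcases hy.1.eq_or_lt with rfl | h0
  · exact Or.inl rfl
  rcases hy.2.eq_or_lt with rfl | h1
  · exact Or.inr (Or.inl rfl)
  · exact Or.inr (Or.inr ⟨h0, h1⟩)

lemma exists_Ioo_subset_inter_I01 {U : Set ℝ} (hU : IsOpen U) (hUne : (U ∩ I01).Nonempty) :
    ∃ u v, u < v ∧ Ioo u v ⊆ U ∩ I01 := by
  obtain ⟨x, hxU, hx⟩ := hUne
  have hx' : x ∈ closure (Ioo (0 : ℝ) 1) := by rwa [closure_Ioo zero_ne_one]
  obtain ⟨u, v, huv, h⟩ :=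
    (hU.inter isOpen_Ioo).exists_Ioo_subset (mem_closure_iff.1 hx' U hU hxU)
  exact ⟨u, v, huv, h.trans (inter_subset_inter_right _ Ioo_subset_Icc_self)⟩

lemma one_sub_mem_I01 {x : ℝ} (hx : x ∈ I01) : 1 - x ∈ I01 :=
  ⟨sub_nonneg.2 hx.2, sub_le_self 1 hx.1⟩

lemma strictMonoOn_or_strictAntiOn_comp {g f : ℝ → ℝ} {s t : Set ℝ}
    (hg : StrictMonoOn g t ∨ StrictAntiOn g t) (hf : StrictMonoOn f s ∨ StrictAntiOn f s)
    (hst : MapsTo f s t) : StrictMonoOn (g ∘ f) s ∨ StrictAntiOn (g ∘ f) s := by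
  rcases hg with hg | hg <;> rcases hf with hf | hf
  exacts [Or.inl (hg.comp hf hst), Or.inr (hg.comp_strictAntiOn hf hst),
    Or.inr (hg.comp_strictMonoOn hf hst), Or.inl (hg.comp hf hst)]

section Endpoints

variable {f : ℝ → ℝ}

theorem PiecewiseMonotonic.exists_Ioo_zero (hf : PiecewiseMonotonic f) :
    ∃ w, 0 < w ∧ (StrictMonoOn f (Ioo 0 w) ∨ StrictAntiOn f (Ioo 0 w)) := by
  obtain ⟨n, hn, a, ha0, -, hlt, hbr⟩ := hf
  exact ⟨a 1, ha0 ▸ hlt 0 hn, ha0 ▸ (hbr 0 hn).2⟩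

theorem PiecewiseMonotonic.exists_Ioo_one (hf : PiecewiseMonotonic f) :
    ∃ w, w < 1 ∧ (StrictMonoOn f (Ioo w 1) ∨ StrictAntiOn f (Ioo w 1)) := by
  obtain ⟨n, hn, a, -, han, hlt, hbr⟩ := hf
  obtain ⟨m, rfl⟩ := Nat.exists_eq_add_one_of_ne_zero hn.ne'
  exact ⟨a m, han ▸ hlt m m.lt_succ_self, han ▸ (hbr m m.lt_succ_self).2⟩

lemma strictMonoOn_of_continuousWithinAt_of_pos {w : ℝ} (hw : 0 < w)
    (hc : ContinuousWithinAt f (Ioo 0 w) 0) (h0 : f 0 = 0) (hpos : ∀ x ∈ Ioo 0 w, 0 < f x)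
    (hmono : StrictMonoOn f (Ioo 0 w) ∨ StrictAntiOn f (Ioo 0 w)) : StrictMonoOn f (Ioo 0 w) := by
  refine hmono.resolve_right fun hanti => ?_
  have hx : w / 2 ∈ Ioo 0 w := ⟨half_pos hw, half_lt_self hw⟩
  have h0x : (0 : ℝ) ∈ closure (Ioo 0 (w / 2)) := by
    rw [closure_Ioo (half_pos hw).ne]
    exact ⟨le_rfl, (half_pos hw).le⟩
  have hle : f (w / 2) ≤ f 0 := continuousWithinAt_const.closure_le h0x
    (hc.mono (Ioo_subset_Ioo_right hx.2.le))
    fun y hy => (hanti ⟨hy.1, hy.2.trans hx.2⟩ hx hy.2).le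
  exact (hpos _ hx).not_ge (h0 ▸ hle)

theorem MixingOn.exists_mem_Ioo_apply_le (hf : MixingOn f I01) (hmaps : MapsTo f I01 I01)
    (hc : ContinuousOn f I01) (hpos : ∀ x ∈ Ioc 0 1, 0 < f x) {w : ℝ} (hw : 0 < w)
    (hw1 : w ≤ 1) :
    ∃ z ∈ Ioo 0 w, f z ≤ z := by
  by_contra! hz
  have ht : w / 2 ∈ Ioo 0 w := ⟨half_pos hw, half_lt_self hw⟩
  obtain ⟨x₀, hx₀, hmin⟩ := isCompact_Icc.exists_isMinOn
    (nonempty_Icc.2 (ht.2.le.trans hw1)) (hc.mono (Icc_subset_Icc (half_pos hw).le le_rfl))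
  have hβ : 0 < min (w / 2) (f x₀) :=
    lt_min ht.1 (hpos x₀ ⟨ht.1.trans_le hx₀.1, hx₀.2⟩)
  set β := min (w / 2) (f x₀)
  -- Points below `w / 2` are pushed up, the others land above the minimum `f x₀`.
  have hS : MapsTo f (Icc β 1) (Icc β 1) := by
    intro x hx
    have hx0 : 0 < x := hβ.trans_le hx.1
    refine ⟨?_, (hmaps ⟨hx0.le, hx.2⟩).2⟩
    rcases lt_or_ge x (w / 2) with hxt | hxt
    · exact hx.1.trans (hz x ⟨hx0, hxt.trans ht.2⟩).le
    · exact (min_le_right _ _).trans (hmin ⟨hxt, hx.2⟩)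
  obtain ⟨y, hyS, hyV⟩ := hf.inter_nonempty_of_mapsTo (S := Icc β 1) isOpen_Ioi isOpen_Iio
    ⟨1, (min_le_left _ _).trans_lt (ht.2.trans_le hw1), zero_le_one, le_rfl⟩
    ⟨0, hβ, le_rfl, zero_le_one⟩ (fun x hx => ⟨le_of_lt hx.1, hx.2.2⟩) hS
  exact (not_lt.2 hyS.1) hyV

theorem MixingOn.exists_mem_Ioc_eq_zero (hf : MixingOn f I01) (hmaps : MapsTo f I01 I01)
    (hc : ContinuousOn f I01) (h0 : f 0 = 0) {w : ℝ} (hw : 0 < w)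
    (hmono : StrictMonoOn f (Ioo 0 w) ∨ StrictAntiOn f (Ioo 0 w)) :
    ∃ x ∈ Ioc 0 1, f x = 0 := by
  wlog hw1 : w ≤ 1 generalizing w
  · exact this (lt_min hw one_pos)
      (hmono.imp (·.mono (Ioo_subset_Ioo_right (min_le_left _ _)))
        (·.mono (Ioo_subset_Ioo_right (min_le_left _ _)))) (min_le_right _ _)
  by_contra! hne
  have hpos : ∀ x ∈ Ioc 0 1, 0 < f x := fun x hx =>
    (hmaps ⟨hx.1.le, hx.2⟩).1.lt_of_ne' (hne x hx)
  have hJ : Ioo 0 w ⊆ Ioc 0 1 := fun x hx => ⟨hx.1, hx.2.le.trans hw1⟩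
  have hinc : StrictMonoOn f (Ioo 0 w) := strictMonoOn_of_continuousWithinAt_of_pos hw
    ((hc 0 ⟨le_rfl, zero_le_one⟩).mono (hJ.trans Ioc_subset_Icc_self)) h0
    (fun x hx => hpos x (hJ hx)) hmono
  obtain ⟨z, hz, hfz⟩ := hf.exists_mem_Ioo_apply_le hmaps hc hpos hw hw1
  have hz1 : z < 1 := hz.2.trans_le hw1
  have hS : MapsTo f (Icc 0 z) (Icc 0 z) := by
    intro x hx
    rcases hx.1.eq_or_lt with rfl | hx0
    · rw [h0]; exact ⟨le_rfl, hz.1.le⟩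
    refine ⟨(hpos x ⟨hx0, hx.2.trans hz1.le⟩).le, le_trans ?_ hfz⟩
    exact hinc.monotoneOn ⟨hx0, hx.2.trans_lt hz.2⟩ hz hx.2
  obtain ⟨y, hyS, hyV⟩ := hf.inter_nonempty_of_mapsTo (S := Icc 0 z) isOpen_Iio isOpen_Ioi
    ⟨0, hz.1, le_rfl, zero_le_one⟩ ⟨1, hz1, zero_le_one, le_rfl⟩
    (fun x hx => ⟨hx.2.1, le_of_lt hx.1⟩) hS
  exact (not_lt.2 hyS.2) hyV

theorem MixingOn.reflect (hf : MixingOn f I01) : MixingOn (fun x => 1 - f (1 - x)) I01 := by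
  have hconj : Function.Semiconj (fun x : ℝ => 1 - x) (fun x => 1 - f (1 - x)) f :=
    fun x => sub_sub_cancel 1 _
  have hσ : Continuous fun x : ℝ => 1 - x := continuous_const.sub continuous_id
  intro U V hU hV ⟨x, hxU, hx⟩ ⟨y, hyV, hy⟩
  obtain ⟨N, hN⟩ := hf _ _ (hU.preimage hσ) (hV.preimage hσ)
    ⟨1 - x, by simpa using hxU, one_sub_mem_I01 hx⟩
    ⟨1 - y, by simpa using hyV, one_sub_mem_I01 hy⟩
  refine ⟨N, fun n hn => ?_⟩
  obtain ⟨_, ⟨x', ⟨hx'U, hx'⟩, rfl⟩, hV', hx'n⟩ := hN n hn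
  have hiter : 1 - (fun x => 1 - f (1 - x))^[n] (1 - x') = f^[n] x' := by
    simpa using hconj.iterate_right n (1 - x')
  refine ⟨1 - f^[n] x', ⟨1 - x', ⟨hx'U, one_sub_mem_I01 hx'⟩, by linarith⟩, hV', ?_⟩
  simpa using one_sub_mem_I01 hx'n

theorem MixingOn.exists_mem_Ico_eq_one (hf : MixingOn f I01) (hmaps : MapsTo f I01 I01)
    (hc : ContinuousOn f I01) (h1 : f 1 = 1) {w : ℝ} (hw : w < 1)
    (hmono : StrictMonoOn f (Ioo w 1) ∨ StrictAntiOn f (Ioo w 1)) :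
    ∃ x ∈ Ico 0 1, f x = 1 := by
  have hJ : ∀ x ∈ Ioo 0 (1 - w), 1 - x ∈ Ioo w 1 := fun x hx =>
    ⟨by linarith [hx.2], by linarith [hx.1]⟩
  have hmaps' : MapsTo (fun x => 1 - f (1 - x)) I01 I01 := fun x hx =>
    one_sub_mem_I01 (hmaps (one_sub_mem_I01 hx))
  have hc' : ContinuousOn (fun x => 1 - f (1 - x)) I01 := continuousOn_const.sub
    (hc.comp (continuousOn_const.sub continuousOn_id) fun _ => one_sub_mem_I01)
  have hmono' : StrictMonoOn (fun x => 1 - f (1 - x)) (Ioo 0 (1 - w)) ∨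
      StrictAntiOn (fun x => 1 - f (1 - x)) (Ioo 0 (1 - w)) := by
    refine hmono.imp (fun h x hx y hy hxy => ?_) (fun h x hx y hy hxy => ?_)
    · linarith [h (hJ y hy) (hJ x hx) (by linarith : 1 - y < 1 - x)]
    · linarith [h (hJ y hy) (hJ x hx) (by linarith : 1 - y < 1 - x)]
  obtain ⟨x, hx, hx0⟩ := hf.reflect.exists_mem_Ioc_eq_zero hmaps' hc' (by simp [h1])
    (sub_pos.2 hw) hmono'
  exact ⟨1 - x, ⟨by linarith [hx.2], by linarith [hx.1]⟩, by linarith⟩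

lemma exists_mapsTo_Ioo_of_apply_zero_eq_one (hmaps : MapsTo f I01 I01) (hc : ContinuousOn f I01)
    (h0 : f 0 = 1) (hne : ∀ x ∈ Ioo 0 1, f x ≠ 1) {w₀ w₁ : ℝ} (hw₀ : 0 < w₀)
    (hw₁ : w₁ < 1) :
    ∃ δ, 0 < δ ∧ δ ≤ w₀ ∧ MapsTo f (Ioo 0 δ) (Ioo w₁ 1) := by
  have hc0 : ContinuousWithinAt f (Ioo 0 1) 0 :=
    (hc 0 ⟨le_rfl, zero_le_one⟩).mono Ioo_subset_Icc_self
  rw [ContinuousWithinAt, nhdsWithin_Ioo_eq_nhdsGT one_pos, h0] at hc0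
  obtain ⟨δ, hδ, hδs⟩ := mem_nhdsGT_iff_exists_Ioo_subset.1
    (Filter.Eventually.and (Ioo_mem_nhdsGT one_pos) (hc0.eventually_const_lt hw₁))
  refine ⟨min δ w₀, lt_min hδ hw₀, min_le_right _ _, fun x hx => ?_⟩
  obtain ⟨hx1, hfx⟩ := hδs ⟨hx.1, hx.2.trans_le (min_le_left _ _)⟩
  exact ⟨hfx, (hmaps (Ioo_subset_Icc_self hx1)).2.lt_of_ne (hne x hx1)⟩

theorem MixingOn.exists_mem_Ioo_eq_zero_or_eq_one (hf : MixingOn f I01)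
    (hmaps : MapsTo f I01 I01) (hc : ContinuousOn f I01) (h0 : f 0 = 1) (h1 : f 1 = 0)
    {w₀ w₁ : ℝ} (hw₀ : 0 < w₀) (hw₁ : w₁ < 1)
    (hmono₀ : StrictMonoOn f (Ioo 0 w₀) ∨ StrictAntiOn f (Ioo 0 w₀))
    (hmono₁ : StrictMonoOn f (Ioo w₁ 1) ∨ StrictAntiOn f (Ioo w₁ 1)) :
    (∃ x ∈ Ioo 0 1, f x = 0) ∨ ∃ x ∈ Ioo 0 1, f x = 1 := by
  by_contra! hne
  obtain ⟨hne₀, hne₁⟩ := hne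
  obtain ⟨δ, hδ, hδw, hδmaps⟩ :=
    exists_mapsTo_Ioo_of_apply_zero_eq_one hmaps hc h0 hne₁ hw₀ hw₁
  have hsub : Ioo 0 δ ⊆ Ioo 0 w₀ := Ioo_subset_Ioo_right hδw
  have hmono : StrictMonoOn f^[2] (Ioo 0 δ) ∨ StrictAntiOn f^[2] (Ioo 0 δ) :=
    strictMonoOn_or_strictAntiOn_comp hmono₁ (hmono₀.imp (·.mono hsub) (·.mono hsub)) hδmaps
  obtain ⟨x, hx, hx0⟩ := (hf.iterate two_pos).exists_mem_Ioc_eq_zero (hmaps.iterate 2)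
    (hc.iterate hmaps 2) (show f (f 0) = 0 by rw [h0, h1]) hδ hmono
  change f (f x) = 0 at hx0
  -- `f x` is a preimage of `0`, hence `1`; and `x` is then a preimage of `1`, hence `0`.
  have hfx : f x = 1 := by
    rcases eq_zero_or_eq_one_or_mem_Ioo (hmaps ⟨hx.1.le, hx.2⟩) with h | h | h
    · rw [h, h0] at hx0; exact absurd hx0 one_ne_zero
    · exact h
    · exact absurd hx0 (hne₀ _ h)
  rcases hx.2.eq_or_lt with rfl | hx1
  · rw [h1] at hfx; exact zero_ne_one hfx
  · exact hne₁ x ⟨hx.1, hx1⟩ hfx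

end Endpoints

section Covering

variable {f : ℝ → ℝ} {u v : ℝ}

theorem MixingOn.eventually_apply_mem_image_iterate (hf : MixingOn f I01)
    (hmaps : MapsTo f I01 I01) (hc : ContinuousOn f I01) (huv : u < v) (hJ : Ioo u v ⊆ I01)
    {y : ℝ} (hy : y ∈ Ioo 0 1) : ∀ᶠ n in atTop, f y ∈ f^[n] '' Ioo u v :=
  (hf.eventually_mem_image_iterate hmaps hc huv hJ
    ⟨0, hy.1, le_rfl, zero_le_one⟩ ⟨1, hy.2, zero_le_one, le_rfl⟩).apply_mem_image_iterate

theorem MixingOn.eventually_zero_mem_image_iterate (hf : MixingOn f I01)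
    (hmaps : MapsTo f I01 I01) (hc : ContinuousOn f I01) (hpm : PiecewiseMonotonic f)
    (huv : u < v) (hJ : Ioo u v ⊆ I01) : ∀ᶠ n in atTop, 0 ∈ f^[n] '' Ioo u v := by
  by_contra hR₀
  have hne₀ : ∀ x ∈ Ioo 0 1, f x ≠ 0 := fun x hx hx0 =>
    hR₀ (hx0 ▸ hf.eventually_apply_mem_image_iterate hmaps hc huv hJ hx)
  obtain ⟨w₀, hw₀, hmono₀⟩ := hpm.exists_Ioo_zero
  obtain ⟨w₁, hw₁, hmono₁⟩ := hpm.exists_Ioo_one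
  have hsurj := hf.surjOn hmaps hc isCompact_Icc
  have hf1 : f 1 = 0 := by
    obtain ⟨y, hy, hy0⟩ := hsurj (show (0 : ℝ) ∈ I01 from ⟨le_rfl, zero_le_one⟩)
    rcases eq_zero_or_eq_one_or_mem_Ioo hy with rfl | rfl | hy'
    · obtain ⟨x, hx, hx0⟩ := hf.exists_mem_Ioc_eq_zero hmaps hc hy0 hw₀ hmono₀
      rcases hx.2.eq_or_lt with rfl | hx1
      exacts [hx0, absurd hx0 (hne₀ x ⟨hx.1, hx1⟩)]
    · exact hy0
    · exact absurd hy0 (hne₀ y hy')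
  have hne₁ : ∀ x ∈ Ioo 0 1, f x ≠ 1 := fun x hx hx1 => hR₀ <| hf1 ▸
    (hx1 ▸ hf.eventually_apply_mem_image_iterate hmaps hc huv hJ hx).apply_mem_image_iterate
  have hf0 : f 0 = 1 := by
    obtain ⟨y, hy, hy1⟩ := hsurj (show (1 : ℝ) ∈ I01 from ⟨zero_le_one, le_rfl⟩)
    rcases eq_zero_or_eq_one_or_mem_Ioo hy with rfl | rfl | hy'
    · exact hy1
    · exact absurd (hf1.symm.trans hy1) zero_ne_one
    · exact absurd hy1 (hne₁ y hy')
  rcases hf.exists_mem_Ioo_eq_zero_or_eq_one hmaps hc hf0 hf1 hw₀ hw₁ hmono₀ hmono₁ with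
    ⟨x, hx, hx0⟩ | ⟨x, hx, hx1⟩
  exacts [hne₀ x hx hx0, hne₁ x hx hx1]

theorem MixingOn.eventually_one_mem_image_iterate (hf : MixingOn f I01)
    (hmaps : MapsTo f I01 I01) (hc : ContinuousOn f I01) (hpm : PiecewiseMonotonic f)
    (huv : u < v) (hJ : Ioo u v ⊆ I01) : ∀ᶠ n in atTop, 1 ∈ f^[n] '' Ioo u v := by
  by_contra hR₁
  have hne₁ : ∀ x ∈ Ioo 0 1, f x ≠ 1 := fun x hx hx1 =>
    hR₁ (hx1 ▸ hf.eventually_apply_mem_image_iterate hmaps hc huv hJ hx)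
  have hf0 : f 0 ≠ 1 := fun h => hR₁ <| h ▸
    (hf.eventually_zero_mem_image_iterate hmaps hc hpm huv hJ).apply_mem_image_iterate
  have hf1 : f 1 = 1 := by
    obtain ⟨y, hy, hy1⟩ := hf.surjOn hmaps hc isCompact_Icc
      (show (1 : ℝ) ∈ I01 from ⟨zero_le_one, le_rfl⟩)
    rcases eq_zero_or_eq_one_or_mem_Ioo hy with rfl | rfl | hy'
    · exact absurd hy1 hf0
    · exact hy1
    · exact absurd hy1 (hne₁ y hy')
  obtain ⟨w₁, hw₁, hmono₁⟩ := hpm.exists_Ioo_one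
  obtain ⟨x, hx, hx1⟩ := hf.exists_mem_Ico_eq_one hmaps hc hf1 hw₁ hmono₁
  rcases hx.1.eq_or_lt with rfl | hx0
  exacts [hf0 hx1, hne₁ x ⟨hx0, hx.2⟩ hx1]

end Covering

theorem stmt7_general (τ : ℝ → ℝ) (hmaps : Set.MapsTo τ I01 I01) (hc : ContinuousOn τ I01)
    (hpm : PiecewiseMonotonic τ) (hmix : MixingOn τ I01) :
    ExactOn τ I01 := by
  intro U hU hUne
  obtain ⟨u, v, huv, hJU⟩ := exists_Ioo_subset_inter_I01 hU hUne
  have hJ : Ioo u v ⊆ I01 := hJU.trans inter_subset_right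
  obtain ⟨n, h0, h1⟩ := ((hmix.eventually_zero_mem_image_iterate hmaps hc hpm huv hJ).and
    (hmix.eventually_one_mem_image_iterate hmaps hc hpm huv hJ)).exists
  refine ⟨n, ((hmaps.iterate n).mono_left inter_subset_right).image_subset.antisymm ?_⟩
  calc I01 ⊆ τ^[n] '' Ioo u v :=
        (isPreconnected_Ioo.image _ ((hc.iterate hmaps n).mono hJ)).Icc_subset h0 h1
    _ ⊆ τ^[n] '' (U ∩ I01) := image_mono hJU

/-- A continuous, piecewise monotonic, topologically mixing map of `[0,1]`
that is not essentially injective is topologically exact. -/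
theorem stmt7 (τ : ℝ → ℝ) (hmaps : Set.MapsTo τ I01 I01) (hc : ContinuousOn τ I01)
    (hpm : PiecewiseMonotonic τ) (hmix : MixingOn τ I01)
    (hni : ¬ EssentiallyInjective τ) :
    ExactOn τ I01 :=
  stmt7_general τ hmaps hc hpm hmix
end
end

section
/- If √2 < s ≤ 2, then the restricted tent map T_s : [0,1] → [0,1] is topologically exact; in particular it is topologically mixing and transitive. -/
open Set MeasureTheory

noncomputable section

/-! On either side of the critical point `c = 1 - 1/s` the map `T_s` is affine with slope `±s`.
Hence an interval not containing `c` is stretched by `s`, and an interval containing `c` has a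
half that is stretched onto an interval ending at `T_s c = 1`. After a second step such an
interval `[u, 1]` either contains `c`, and then covers `T_s [c, 1] = [0, 1]`, or is stretched
once more. So `T_s²` either covers `[0, 1]` or stretches a subinterval by `s² / 2 > 1`; since
lengths stay at most `1`, every interval is eventually mapped onto `[0, 1]`. -/

section Dynamics

variable {f : ℝ → ℝ}

lemma exists_Icc_subset_of_isOpen_of_mem_Icc {U : Set ℝ} {p q x : ℝ} (hpq : p < q)
    (hU : IsOpen U) (hxU : x ∈ U) (hx : x ∈ Icc p q) :
    ∃ a b, a < b ∧ Icc a b ⊆ U ∩ Icc p q := by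
  have hx' : x ∈ closure (Ioo p q) := by rwa [closure_Ioo hpq.ne]
  obtain ⟨y, hy⟩ := mem_closure_iff.1 hx' U hU hxU
  obtain ⟨ε, hε, hball⟩ := Metric.isOpen_iff.1 (hU.inter isOpen_Ioo) y hy
  refine ⟨y - ε / 2, y + ε / 2, by linarith, ?_⟩
  rw [← Real.closedBall_eq_Icc]
  exact (Metric.closedBall_subset_ball (half_lt_self hε)).trans
    (hball.trans (inter_subset_inter_right U Ioo_subset_Icc_self))

lemma exists_iterate_image_superset_of_expanding {p q r : ℝ} (hr : 1 < r)
    (hf : MapsTo f (Icc p q) (Icc p q))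
    (hexp : ∀ a b, a < b → Icc a b ⊆ Icc p q → Icc p q ⊆ f '' Icc a b ∨
      ∃ a' b', a' < b' ∧ Icc a' b' ⊆ f '' Icc a b ∧ r * (b - a) ≤ b' - a')
    {a b : ℝ} (hab : a < b) (hJ : Icc a b ⊆ Icc p q) :
    ∃ n, Icc p q ⊆ f^[n] '' Icc a b := by
  suffices key : ∀ k : ℕ, ∀ a b, a < b → Icc a b ⊆ Icc p q → q - p < r ^ k * (b - a) →
      ∃ n, Icc p q ⊆ f^[n] '' Icc a b by
    obtain ⟨k, hk⟩ := pow_unbounded_of_one_lt ((q - p) / (b - a)) hr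
    exact key k a b hab hJ (by rwa [div_lt_iff₀ (sub_pos.2 hab)] at hk)
  intro k
  induction k with
  | zero =>
    intro a b hab hJ hlen
    obtain ⟨hpa, hbq⟩ := (Icc_subset_Icc_iff hab.le).1 hJ
    rw [pow_zero, one_mul] at hlen
    linarith
  | succ k ih =>
    intro a b hab hJ hlen
    rcases hexp a b hab hJ with hcover | ⟨a', b', hab', hsub, hgrow⟩
    · exact ⟨1, hcover⟩
    have hJ' : Icc a' b' ⊆ Icc p q := hsub.trans (hf.mono_left hJ).image_subset
    have hlen' : q - p < r ^ k * (b' - a') := by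
      have hrk : 0 ≤ r ^ k := by positivity
      calc q - p < r ^ (k + 1) * (b - a) := hlen
        _ = r ^ k * (r * (b - a)) := by ring
        _ ≤ r ^ k * (b' - a') := mul_le_mul_of_nonneg_left hgrow hrk
    obtain ⟨n, hn⟩ := ih a' b' hab' hJ' hlen'
    refine ⟨n + 1, hn.trans ?_⟩
    rw [Function.iterate_succ, image_comp]
    exact image_mono hsub

lemma exactOn_Icc_of_iterate_image_superset {p q : ℝ} (hpq : p < q)
    (hf : MapsTo f (Icc p q) (Icc p q))
    (hcover : ∀ a b, a < b → Icc a b ⊆ Icc p q → ∃ n, Icc p q ⊆ f^[n] '' Icc a b) :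
    ExactOn f (Icc p q) := by
  rintro U hU ⟨x, hxU, hx⟩
  obtain ⟨a, b, hab, hsub⟩ := exists_Icc_subset_of_isOpen_of_mem_Icc hpq hU hxU hx
  obtain ⟨n, hn⟩ := hcover a b hab (hsub.trans inter_subset_right)
  exact ⟨n, ((hf.iterate n).mono_left inter_subset_right).image_subset.antisymm
    (hn.trans (image_mono hsub))⟩

lemma ExactOn.mixingOn {K : Set ℝ} (hf : SurjOn f K K) (h : ExactOn f K) : MixingOn f K := by
  intro U V hU _ hUK ⟨y, hy⟩
  obtain ⟨N, hN⟩ := h U hU hUK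
  refine ⟨N, fun n hn => ⟨y, ?_, hy⟩⟩
  rw [← Nat.sub_add_cancel hn, Function.iterate_add, image_comp, hN]
  exact hf.iterate (n - N) hy.2

lemma MixingOn.transitiveOn {K : Set ℝ} (h : MixingOn f K) : TransitiveOn f K := by
  intro U V hU hV hUK hVK
  obtain ⟨N, hN⟩ := h U V hU hV hUK hVK
  exact ⟨N, hN N le_rfl⟩

end Dynamics

section Tent

variable {s : ℝ}

lemma tent_of_le {x : ℝ} (hx : x ≤ 1 - 1 / s) : tent s x = 1 + s * (x - (1 - 1 / s)) :=
  if_pos hx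

lemma tent_of_ge {x : ℝ} (hx : 1 - 1 / s ≤ x) : tent s x = 1 - s * (x - (1 - 1 / s)) := by
  rcases hx.eq_or_lt with rfl | hlt
  · simp [tent]
  · exact if_neg (not_le.2 hlt)

lemma tent_crit : tent s (1 - 1 / s) = 1 := by
  simp [tent]

lemma tent_one (hs : 0 < s) : tent s 1 = 0 := by
  rw [tent, if_neg (by simpa using hs)]
  field_simp
  ring

lemma continuous_tent (s : ℝ) : Continuous (tent s) :=
  Continuous.if_le (by fun_prop) (by fun_prop) continuous_id continuous_const
    (fun x hx => by simp [hx])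

lemma mapsTo_tent (hs0 : 0 < s) (hs2 : s ≤ 2) : MapsTo (tent s) I01 I01 := by
  rintro x ⟨hx0, hx1⟩
  have hsc : s * (1 - 1 / s) = s - 1 := by field_simp
  rcases le_total x (1 - 1 / s) with hx | hx
  · rw [tent_of_le hx]
    constructor <;> nlinarith
  · rw [tent_of_ge hx]
    constructor <;> nlinarith

lemma I01_subset_image_tent_Icc_crit (hs : 0 < s) : I01 ⊆ tent s '' Icc (1 - 1 / s) 1 := by
  have h := intermediate_value_Icc' (sub_le_self 1 (by positivity : 0 ≤ 1 / s))
    (continuous_tent s).continuousOn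
  rwa [tent_one hs, tent_crit] at h

lemma surjOn_tent (hs : 1 ≤ s) : SurjOn (tent s) I01 I01 :=
  (I01_subset_image_tent_Icc_crit (by positivity)).trans
    (image_mono (Icc_subset_Icc (sub_nonneg.2 (div_le_one_of_le₀ hs (by positivity))) le_rfl :
      Icc (1 - 1 / s) 1 ⊆ I01))

lemma exists_Icc_subset_image_tent (hs : 0 < s) {a b : ℝ} (hab : a < b) :
    ∃ a' b', a' < b' ∧ Icc a' b' ⊆ tent s '' Icc a b ∧
      s / 2 * (b - a) ≤ b' - a' ∧ (s * (b - a) ≤ b' - a' ∨ b' = 1) := by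
  have hT : ∀ {x y : ℝ}, ContinuousOn (tent s) (Icc x y) :=
    (continuous_tent s).continuousOn
  set c := 1 - 1 / s
  have hTc : tent s c = 1 := tent_crit
  rcases le_or_gt b c with hbc | hcb
  · have hlen : tent s b - tent s a = s * (b - a) := by
      rw [tent_of_le hbc, tent_of_le (hab.le.trans hbc)]; ring
    exact ⟨tent s a, tent s b, by nlinarith, intermediate_value_Icc hab.le hT, by nlinarith,
      Or.inl hlen.ge⟩
  rcases le_or_gt c a with hca | hac
  · have hlen : tent s a - tent s b = s * (b - a) := by
      rw [tent_of_ge hca, tent_of_ge (hca.trans hab.le)]; ring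
    exact ⟨tent s b, tent s a, by nlinarith, intermediate_value_Icc' hab.le hT, by nlinarith,
      Or.inl hlen.ge⟩
  rcases le_total (b - c) (c - a) with hleft | hright
  · have hlen : 1 - tent s a = s * (c - a) := by rw [tent_of_le hac.le]; ring
    refine ⟨tent s a, 1, by nlinarith, ?_, by nlinarith, Or.inr rfl⟩
    rw [← hTc]
    exact (intermediate_value_Icc hac.le hT).trans (image_mono (Icc_subset_Icc le_rfl hcb.le))
  · have hlen : 1 - tent s b = s * (b - c) := by rw [tent_of_ge hcb.le]; ring
    refine ⟨tent s b, 1, by nlinarith, ?_, by nlinarith, Or.inr rfl⟩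
    rw [← hTc]
    exact (intermediate_value_Icc' hcb.le hT).trans (image_mono (Icc_subset_Icc hac.le le_rfl))

lemma tent_iterate_two_expands (hs : 0 < s) {a b : ℝ} (hab : a < b) :
    I01 ⊆ (tent s)^[2] '' Icc a b ∨
      ∃ a' b', a' < b' ∧ Icc a' b' ⊆ (tent s)^[2] '' Icc a b ∧ s ^ 2 / 2 * (b - a) ≤ b' - a' := by
  have hT : ∀ {x y : ℝ}, ContinuousOn (tent s) (Icc x y) :=
    (continuous_tent s).continuousOn
  rw [show (tent s)^[2] = tent s ∘ tent s from rfl, image_comp]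
  obtain ⟨a₁, b₁, hab₁, hsub₁, hhalf₁, hgrow₁ | rfl⟩ := exists_Icc_subset_image_tent hs hab
  · obtain ⟨a₂, b₂, hab₂, hsub₂, hhalf₂, -⟩ := exists_Icc_subset_image_tent hs hab₁
    refine Or.inr ⟨a₂, b₂, hab₂, hsub₂.trans (image_mono hsub₁), ?_⟩
    nlinarith
  rcases le_or_gt a₁ (1 - 1 / s) with hac | hca
  · left
    exact (I01_subset_image_tent_Icc_crit hs).trans
      (image_mono ((Icc_subset_Icc hac le_rfl).trans hsub₁))
  · right
    have hlen : tent s a₁ - tent s 1 = s * (1 - a₁) := by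
      rw [tent_of_ge hca.le, tent_of_ge (hca.le.trans hab₁.le)]; ring
    refine ⟨tent s 1, tent s a₁, by nlinarith,
      (intermediate_value_Icc' hab₁.le hT).trans (image_mono hsub₁), by nlinarith⟩

end Tent

/-- For `√2 < s ≤ 2` the restricted tent map `T_s` is topologically exact,
hence topologically mixing and transitive. -/
theorem stmt8 (s : ℝ) (h1 : Real.sqrt 2 < s) (h2 : s ≤ 2) :
    ExactOn (tent s) I01 ∧ MixingOn (tent s) I01 ∧ TransitiveOn (tent s) I01 := by
  have hs0 : 0 < s := (Real.sqrt_nonneg 2).trans_lt h1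
  have hsq : 2 < s ^ 2 := (Real.sqrt_lt' hs0).1 h1
  have hs1 : 1 ≤ s := by nlinarith
  have hmaps := mapsTo_tent hs0 h2
  have hexact : ExactOn (tent s) I01 := by
    refine exactOn_Icc_of_iterate_image_superset zero_lt_one hmaps fun a b hab hJ => ?_
    obtain ⟨n, hn⟩ := exists_iterate_image_superset_of_expanding (by linarith : 1 < s ^ 2 / 2)
      (hmaps.iterate 2) (fun _ _ hab _ => tent_iterate_two_expands hs0 hab) hab hJ
    exact ⟨2 * n, by rwa [Function.iterate_mul]⟩
  have hmix := hexact.mixingOn (surjOn_tent hs1)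
  exact ⟨hexact, hmix, hmix.transitiveOn⟩
end
end

section
/- For every β > 1, the β-transformation τ_β is topologically exact: for every nonempty open subset U of [0,1) there exists n ≥ 0 such that the image τ_βⁿ(U) equals [0,1). -/
/-!
An interval `[a, b)` is mapped by `τ_β` either onto a translate of `[βa, βb)` inside `[0, 1)`,
when no integer lies in `(βa, βb)`, or onto a set containing some `[0, δ)` with `δ > 0`.
The first alternative multiplies the length by `β > 1`, so it cannot repeat forever and some
iterate contains `[0, δ)`. Finally `τ_β [0, δ)` contains `[0, min (βδ) 1)`, so further
iterates exhaust `[0, 1)`.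
-/

open Set MeasureTheory

noncomputable section

/-- The β-transformation `x ↦ βx mod 1` on `[0,1)`. -/
def betaMap (β : ℝ) (x : ℝ) : ℝ := Int.fract (β * x)

lemma Int.Ico_sub_intCast_subset_fract_image {c d : ℝ} {k : ℤ} (hc : (k : ℝ) ≤ c)
    (hd : d ≤ k + 1) : Ico (c - k) (d - k) ⊆ Int.fract '' Ico c d := by
  rintro y ⟨hy₀, hy₁⟩
  refine ⟨y + k, ⟨by linarith, by linarith⟩, ?_⟩
  rw [Int.fract_add_intCast, Int.fract_eq_self.mpr ⟨by linarith, by linarith⟩]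

lemma Int.fract_image_Ico_dichotomy (c d : ℝ) :
    (∃ δ > 0, Ico 0 δ ⊆ Int.fract '' Ico c d) ∨
      Int.fract c + (d - c) ≤ 1 ∧
        Ico (Int.fract c) (Int.fract c + (d - c)) ⊆ Int.fract '' Ico c d := by
  set k := ⌊c⌋
  have hfract : Int.fract c = c - k := rfl
  by_cases hd : d ≤ k + 1
  · right
    rw [hfract, show c - k + (d - c) = d - k by ring]
    exact ⟨by linarith, Int.Ico_sub_intCast_subset_fract_image (Int.floor_le c) hd⟩
  · left
    push Not at hd
    have hck : c < k + 1 := Int.lt_floor_add_one c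
    refine ⟨min d (k + 2) - (k + 1), by simp only [sub_pos, lt_min_iff]; constructor <;> linarith,
      ?_⟩
    have hshift := Int.Ico_sub_intCast_subset_fract_image (c := k + 1) (d := min d (k + 2))
      (k := k + 1) (by push_cast; rfl) (by push_cast; linarith [min_le_right d (k + 2 : ℝ)])
    push_cast at hshift
    rw [sub_self] at hshift
    exact hshift.trans (image_mono (Ico_subset_Ico hck.le (min_le_left _ _)))

lemma mapsTo_betaMap (β : ℝ) : MapsTo (betaMap β) (Ico 0 1) (Ico 0 1) :=
  fun _ _ ↦ ⟨Int.fract_nonneg _, Int.fract_lt_one _⟩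

section

variable {β : ℝ}

lemma betaMap_image_Ico (hβ : 0 < β) (a b : ℝ) :
    betaMap β '' Ico a b = Int.fract '' Ico (β * a) (β * b) := by
  rw [← image_mul_left_Ico hβ, image_image]
  rfl

lemma Ico_zero_min_subset_betaMap_image (hβ : 0 < β) (c : ℝ) :
    Ico 0 (min (β * c) 1) ⊆ betaMap β '' Ico 0 c := by
  rw [betaMap_image_Ico hβ, mul_zero]
  rintro y ⟨hy₀, hy₁⟩
  exact ⟨y, ⟨hy₀, hy₁.trans_le (min_le_left _ _)⟩,
    Int.fract_eq_self.mpr ⟨hy₀, hy₁.trans_le (min_le_right _ _)⟩⟩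

lemma Ico_zero_min_subset_iterate_betaMap_image (hβ : 1 ≤ β) (δ : ℝ) (n : ℕ) :
    Ico 0 (min (β ^ n * δ) 1) ⊆ (betaMap β)^[n] '' Ico 0 δ := by
  induction n with
  | zero => simp [Ico_subset_Ico_right]
  | succ n ih =>
    have hgrow : min (β ^ (n + 1) * δ) 1 ≤ min (β * min (β ^ n * δ) 1) 1 := by
      rw [mul_min_of_nonneg _ _ (by linarith), mul_one, min_assoc, min_eq_right hβ, pow_succ',
        mul_assoc]
    rw [Function.iterate_succ', image_comp]
    exact (Ico_subset_Ico_right hgrow).trans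
      ((Ico_zero_min_subset_betaMap_image (by linarith) _).trans (image_mono ih))

lemma exists_Ico_subset_iterate_betaMap_image_Ico_zero (hβ : 1 < β) {δ : ℝ} (hδ : 0 < δ) :
    ∃ n, Ico 0 1 ⊆ (betaMap β)^[n] '' Ico 0 δ := by
  obtain ⟨n, hn⟩ := pow_unbounded_of_one_lt δ⁻¹ hβ
  refine ⟨n, ?_⟩
  have hcover : min (β ^ n * δ) 1 = 1 :=
    min_eq_right ((inv_lt_iff_one_lt_mul₀ hδ).mp hn).le
  simpa [hcover] using Ico_zero_min_subset_iterate_betaMap_image hβ.le δ n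

lemma exists_Ico_zero_subset_iterate_betaMap_image (hβ : 1 < β) {a b : ℝ} (hab : a < b) :
    ∃ n, ∃ δ > 0, Ico 0 δ ⊆ (betaMap β)^[n] '' Ico a b := by
  have hβ₀ : 0 < β := by linarith
  obtain ⟨N, hN⟩ := pow_unbounded_of_one_lt (b - a)⁻¹ hβ
  rw [inv_lt_iff_one_lt_mul₀ (sub_pos.mpr hab)] at hN
  induction N generalizing a b with
  | zero =>
    rcases Int.fract_image_Ico_dichotomy (β * a) (β * b) with ⟨δ, hδ, hsub⟩ | ⟨hle, -⟩
    · exact ⟨1, δ, hδ, by rwa [Function.iterate_one, betaMap_image_Ico hβ₀]⟩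
    · nlinarith [Int.fract_nonneg (β * a)]
  | succ N ih =>
    rcases Int.fract_image_Ico_dichotomy (β * a) (β * b) with ⟨δ, hδ, hsub⟩ | ⟨-, hsub⟩
    · exact ⟨1, δ, hδ, by rwa [Function.iterate_one, betaMap_image_Ico hβ₀]⟩
    · obtain ⟨n, δ, hδ, hn⟩ := ih (a := Int.fract (β * a))
        (b := Int.fract (β * a) + (β * b - β * a)) (by nlinarith)
        (by rw [pow_succ] at hN; linarith)
      refine ⟨n + 1, δ, hδ, hn.trans ?_⟩
      rw [Function.iterate_succ, image_comp, betaMap_image_Ico hβ₀]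
      exact image_mono hsub

lemma exists_Ico_subset_iterate_betaMap_image_Ico (hβ : 1 < β) {a b : ℝ} (hab : a < b) :
    ∃ n, Ico 0 1 ⊆ (betaMap β)^[n] '' Ico a b := by
  obtain ⟨n, δ, hδ, hn⟩ := exists_Ico_zero_subset_iterate_betaMap_image hβ hab
  obtain ⟨m, hm⟩ := exists_Ico_subset_iterate_betaMap_image_Ico_zero hβ hδ
  refine ⟨m + n, hm.trans ?_⟩
  rw [Function.iterate_add, image_comp]
  exact image_mono hn

end

/-- For every `β > 1`, the β-transformation is topologically exact on
`[0,1)`: every nonempty relatively open subset of `[0,1)` has some iterated image equal to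
`[0,1)`. -/
theorem stmt13 (β : ℝ) (hβ : 1 < β) :
    ∀ U : Set ℝ, IsOpen U → (U ∩ Set.Ico (0 : ℝ) 1).Nonempty →
      ∃ n : ℕ, (betaMap β)^[n] '' (U ∩ Set.Ico (0 : ℝ) 1) = Set.Ico (0 : ℝ) 1 := by
  intro U hU ⟨x, hxU, hx⟩
  obtain ⟨u, hxu, hu⟩ :=
    exists_Ico_subset_of_mem_nhds (Filter.inter_mem (hU.mem_nhds hxU) (Iio_mem_nhds hx.2))
      ⟨1, hx.2⟩
  have hIco : Ico x u ⊆ U ∩ Ico 0 1 := fun y hy ↦ ⟨(hu hy).1, hx.1.trans hy.1, (hu hy).2⟩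
  obtain ⟨n, hn⟩ := exists_Ico_subset_iterate_betaMap_image_Ico hβ hxu
  have himage : (betaMap β)^[n] '' (U ∩ Ico 0 1) ⊆ Ico 0 1 :=
    (((mapsTo_betaMap β).iterate n).mono_left inter_subset_right).image_subset
  exact ⟨n, himage.antisymm (hn.trans (image_mono hIco))⟩
end
end

section
/- For every β > 1, Lebesgue measure on [0,1) is scaled by the β-transformation τ_β by the factor β, and it is the unique Borel probability measure on [0,1) that is scaled by τ_β by some factor s > 0. -/
/-!
On the branch `[k/β, (k+1)/β)` the map `τ_β` is `x ↦ βx - k`, so Lebesgue measure is scaled by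
`β` branch by branch. Conversely, if `m` is scaled by `s`, the distribution function
`F x = m [0, x)` satisfies `s F(x) = ⌊βx⌋ + F(τ_β x)` on `[0,1]`, because `[0, x)` consists of
`⌊βx⌋` full branches, each of mass `1/s`, and one partial branch mapped onto `[0, τ_β x)`. Thus
`D = F - id` satisfies `s D(x) = (β - s) x + D(τ_β x)`. Here `s > 1`: for `s = 1` the mass would
concentrate both at `0` and at `1/β`. Iterating the identity gives `D ≤ 0` if `s ≥ β` and `D ≥ 0`
if `s ≤ β`, while at `x = 1` it reads `D(τ_β 1) = s - β`; hence `s = β` and `D = 0`.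
-/

open Set MeasureTheory

noncomputable section

/-- The measure `m` on `[0,1)` is scaled by `τ` by the factor `s`. -/
def ScaledByIco (τ : ℝ → ℝ) (m : Measure ℝ) (s : ℝ) : Prop :=
  ∀ E : Set ℝ, E ⊆ Set.Ico (0 : ℝ) 1 → MeasurableSet E → Set.InjOn τ E →
    m (τ '' E) = ENNReal.ofReal s * m E

open Filter Topology Function
open scoped Pointwise

def betaBranch (β : ℝ) (k : ℤ) : Set ℝ := Ico (k / β) ((k + 1) / β)

section BetaMap

variable {β : ℝ}

lemma betaMap_mem_Ico (β x : ℝ) : betaMap β x ∈ Ico (0 : ℝ) 1 :=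
  ⟨Int.fract_nonneg _, Int.fract_lt_one _⟩

lemma floor_add_betaMap (β x : ℝ) : (⌊β * x⌋ : ℝ) + betaMap β x = β * x :=
  Int.floor_add_fract _

lemma measurable_betaMap (β : ℝ) : Measurable (betaMap β) :=
  measurable_fract.comp (measurable_const_mul β)

lemma mem_betaBranch_iff (hβ : 0 < β) {k : ℤ} {x : ℝ} : x ∈ betaBranch β k ↔ ⌊β * x⌋ = k := by
  rw [betaBranch, mem_Ico, div_le_iff₀ hβ, lt_div_iff₀ hβ, Int.floor_eq_iff, mul_comm x]

lemma iUnion_betaBranch (hβ : 0 < β) : ⋃ k, betaBranch β k = univ :=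
  eq_univ_of_forall fun _ => mem_iUnion.2 ⟨_, (mem_betaBranch_iff hβ).2 rfl⟩

lemma pairwise_disjoint_betaBranch (hβ : 0 < β) : Pairwise (Disjoint on betaBranch β) :=
  fun _ _ hkl => disjoint_left.2 fun _ hk hl =>
    hkl (((mem_betaBranch_iff hβ).1 hk).symm.trans ((mem_betaBranch_iff hβ).1 hl))

lemma betaMap_eqOn_betaBranch (hβ : 0 < β) (k : ℤ) :
    EqOn (betaMap β) (fun x => β * x - k) (betaBranch β k) := fun x hx => by
  rw [betaMap, Int.fract, (mem_betaBranch_iff hβ).1 hx]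

lemma injOn_betaMap_betaBranch (hβ : 0 < β) (k : ℤ) : InjOn (betaMap β) (betaBranch β k) :=
  ((betaMap_eqOn_betaBranch hβ k).injOn_iff).2 fun x _ y _ h => by
    simpa [hβ.ne'] using h

lemma image_betaMap_Ico (hβ : 0 < β) {k : ℤ} {a b : ℝ} (ha : (k : ℝ) / β ≤ a)
    (hb : b ≤ (k + 1) / β) : betaMap β '' Ico a b = Ico (β * a - k) (β * b - k) := by
  have hsub : Ico a b ⊆ betaBranch β k := Ico_subset_Ico ha hb
  rw [((betaMap_eqOn_betaBranch hβ k).mono hsub).image_eq]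
  simpa only [sub_eq_add_neg] using image_affine_Ico hβ (-k : ℝ) a b

end BetaMap

lemma volume_image_mul_sub (β c : ℝ) (A : Set ℝ) :
    volume ((fun x => β * x - c) '' A) = ENNReal.ofReal |β| * volume A := by
  have : (fun x => β * x - c) '' A = (fun y => y + -c) '' (β • A) := by
    rw [← Set.image_smul, Set.image_image]; simp [sub_eq_add_neg]
  rw [this, image_add_right, measure_preimage_add_right, Measure.addHaar_smul]
  simp

theorem scaledByIco_volume {β : ℝ} (hβ : 0 < β) :
    ScaledByIco (betaMap β) (volume.restrict (Ico 0 1)) β := by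
  intro E hE hEm hinj
  have hτE : betaMap β '' E ⊆ Ico 0 1 :=
    (image_subset_range _ _).trans (range_subset_iff.2 (betaMap_mem_Ico β))
  rw [Measure.restrict_eq_self _ hτE, Measure.restrict_eq_self _ hE]
  have hcover : E = ⋃ k, E ∩ betaBranch β k := by
    rw [← inter_iUnion, iUnion_betaBranch hβ, inter_univ]
  have hdisj : Pairwise (Disjoint on fun k => E ∩ betaBranch β k) := fun _ _ hkl =>
    (pairwise_disjoint_betaBranch hβ hkl).mono inter_subset_right inter_subset_right
  have hmeas : ∀ k, MeasurableSet (E ∩ betaBranch β k) := fun k => hEm.inter measurableSet_Ico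
  have hpiece : ∀ k, volume (betaMap β '' (E ∩ betaBranch β k)) =
      ENNReal.ofReal β * volume (E ∩ betaBranch β k) := fun k => by
    rw [((betaMap_eqOn_betaBranch hβ k).mono inter_subset_right).image_eq,
      volume_image_mul_sub, abs_of_pos hβ]
  calc volume (betaMap β '' E)
      = volume (⋃ k, betaMap β '' (E ∩ betaBranch β k)) := by rw [← image_iUnion, ← hcover]
    _ = ∑' k, ENNReal.ofReal β * volume (E ∩ betaBranch β k) := by
        rw [measure_iUnion (fun k l hkl => (hdisj hkl).image hinj inter_subset_left
          inter_subset_left) fun k => (hmeas k).image_of_measurable_injOn (measurable_betaMap β)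
          (hinj.mono inter_subset_left)]
        simp_rw [hpiece]
    _ = ENNReal.ofReal β * volume E := by
        rw [ENNReal.tsum_mul_left, ← measure_iUnion hdisj hmeas, ← hcover]

lemma nonpos_of_mul_le_comp {α : Type*} {I : Set α} {T : α → α} {f : α → ℝ} {s C : ℝ}
    (hs : 1 < s) (hT : MapsTo T I I) (hC : ∀ x ∈ I, f x ≤ C)
    (hf : ∀ x ∈ I, s * f x ≤ f (T x)) {x : α} (hx : x ∈ I) : f x ≤ 0 := by
  have hiter : ∀ n : ℕ, ∀ x ∈ I, f x ≤ C / s ^ n := by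
    intro n
    induction n with
    | zero => simpa using hC
    | succ n ih =>
      intro x hx
      rw [pow_succ, ← div_div, le_div_iff₀ (by linarith), mul_comm]
      exact (hf x hx).trans (ih _ (hT hx))
  have hlim : Tendsto (fun n : ℕ => C / s ^ n) atTop (𝓝 0) :=
    tendsto_const_nhds.div_atTop (tendsto_pow_atTop_atTop_of_one_lt hs)
  exact ge_of_tendsto' hlim fun n => hiter n x hx

lemma measureReal_Ico_add_Ico {μ : Measure ℝ} [IsFiniteMeasure μ] {a b c : ℝ} (hab : a ≤ b)
    (hbc : b ≤ c) : μ.real (Ico a b) + μ.real (Ico b c) = μ.real (Ico a c) := by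
  rw [← Ico_union_Ico_eq_Ico hab hbc, measureReal_union Ico_disjoint_Ico_same measurableSet_Ico]

lemma eq_volume_restrict_Ico_of_measureReal_Ico {μ : Measure ℝ} [IsFiniteMeasure μ]
    (hμ : μ (Ico 0 1)ᶜ = 0) (h : ∀ x ∈ Icc (0 : ℝ) 1, μ.real (Ico 0 x) = x) :
    μ = volume.restrict (Ico 0 1) := by
  have hIco : ∀ c d : ℝ, 0 ≤ c → d ≤ 1 → μ (Ico c d) = volume (Ico c d) := by
    intro c d hc hd
    rcases le_total d c with hdc | hcd
    · simp [Ico_eq_empty_of_le hdc]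
    have hsplit := measureReal_Ico_add_Ico (μ := μ) hc hcd
    rw [h c ⟨hc, hcd.trans hd⟩, h d ⟨hc.trans hcd, hd⟩] at hsplit
    rw [← ofReal_measureReal, Real.volume_Ico]
    congr 1
    linarith
  refine Measure.ext_of_Ico _ _ fun a b _ => ?_
  rw [← measure_inter_conull hμ, Measure.restrict_apply measurableSet_Ico, Ico_inter_Ico]
  exact hIco _ _ le_sup_right inf_le_right

namespace ScaledByIco

variable {β s : ℝ} {m : Measure ℝ}

lemma measure_Ico_zero_mul_sub (hβ : 0 < β) (hm : ScaledByIco (betaMap β) m s) (k : ℕ)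
    {b : ℝ} (hb : b ≤ (k + 1) / β) (hb1 : b ≤ 1) :
    m (Ico 0 (β * b - k)) = ENNReal.ofReal s * m (Ico (k / β) b) := by
  have hb' : b ≤ ((k : ℤ) + 1) / β := by exact_mod_cast hb
  have h := hm (Ico (k / β) b) (Ico_subset_Ico (by positivity) hb1) measurableSet_Ico
    ((injOn_betaMap_betaBranch hβ k).mono (Ico_subset_Ico (by push_cast; rfl) hb'))
  rwa [image_betaMap_Ico hβ (by push_cast; rfl) hb', Int.cast_natCast, mul_div_cancel₀ _ hβ.ne',
    sub_self] at h

lemma mul_measureReal_Ico (hβ : 0 < β) (hm : ScaledByIco (betaMap β) m s) (hs : 0 ≤ s) (k : ℕ)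
    {b : ℝ} (hb : b ≤ (k + 1) / β) (hb1 : b ≤ 1) :
    s * m.real (Ico (k / β) b) = m.real (Ico 0 (β * b - k)) := by
  rw [measureReal_def, measureReal_def, hm.measure_Ico_zero_mul_sub hβ k hb hb1,
    ENNReal.toReal_mul, ENNReal.toReal_ofReal hs]

lemma measure_singleton_zero_eq_one (hβ : 1 < β) (hm : ScaledByIco (betaMap β) m 1)
    (h1 : m (Ico 0 1) = 1) : m {0} = 1 := by
  have hβ0 : 0 < β := by linarith
  have hβinv : β⁻¹ < 1 := inv_lt_one_of_one_lt₀ hβ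
  have hpow : ∀ n : ℕ, m (Ico 0 (β⁻¹ ^ n)) = 1 := by
    intro n
    induction n with
    | zero => simpa using h1
    | succ n ih =>
      have h := hm.measure_Ico_zero_mul_sub hβ0 0 (b := β⁻¹ ^ (n + 1))
        (by simpa using pow_le_pow_of_le_one (by positivity) hβinv.le (Nat.le_add_left 1 n))
        (pow_le_one₀ (by positivity) hβinv.le)
      have hmul : β * β⁻¹ ^ (n + 1) = β⁻¹ ^ n := by
        rw [pow_succ', ← mul_assoc, mul_inv_cancel₀ hβ0.ne', one_mul]
      rwa [hmul, Nat.cast_zero, sub_zero, ih, ENNReal.ofReal_one, one_mul, zero_div,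
        eq_comm] at h
  have hinter : ⋂ n : ℕ, Ico 0 (β⁻¹ ^ n) = {0} := by
    ext x
    simp only [mem_iInter, mem_Ico, mem_singleton_iff]
    refine ⟨fun h => ?_, fun hx n => by subst hx; exact ⟨le_rfl, by positivity⟩⟩
    by_contra hne
    obtain ⟨n, hn⟩ := exists_pow_lt_of_lt_one ((h 0).1.lt_of_ne' hne) hβinv
    linarith [(h n).2]
  rw [← hinter, Antitone.measure_iInter (fun i j hij => Ico_subset_Ico_right
    (pow_le_pow_of_le_one (by positivity) hβinv.le hij))
    (fun _ => measurableSet_Ico.nullMeasurableSet) ⟨0, by simp [h1]⟩]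
  simp only [hpow, iInf_const]

section Finite

variable [IsFiniteMeasure m]

lemma mul_measureReal_Ico_zero_natCast_div (hβ : 0 < β) (hm : ScaledByIco (betaMap β) m s)
    (hs : 0 ≤ s) (h1 : m (Ico 0 1) = 1) {j : ℕ} (hj : (j : ℝ) ≤ β) :
    s * m.real (Ico 0 (j / β)) = j := by
  induction j with
  | zero => simp
  | succ j ih =>
    push_cast at hj ⊢
    have hfull := hm.mul_measureReal_Ico hβ hs j le_rfl (by rwa [div_le_one hβ])
    rw [mul_div_cancel₀ _ hβ.ne', add_sub_cancel_left, measureReal_def m (Ico 0 1), h1,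
      ENNReal.toReal_one] at hfull
    rw [← measureReal_Ico_add_Ico (b := j / β) (by positivity) (by gcongr; linarith), mul_add,
      hfull, ih (by linarith)]

lemma mul_measureReal_Ico_zero (hβ : 0 < β) (hm : ScaledByIco (betaMap β) m s) (hs : 0 ≤ s)
    (h1 : m (Ico 0 1) = 1) {x : ℝ} (hx : x ∈ Icc 0 1) :
    s * m.real (Ico 0 x) = ⌊β * x⌋ + m.real (Ico 0 (betaMap β x)) := by
  obtain ⟨j, hj⟩ : ∃ j : ℕ, ⌊β * x⌋ = j :=
    Int.eq_ofNat_of_zero_le (Int.floor_nonneg.2 (mul_nonneg hβ.le hx.1))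
  have hxj : x ∈ betaBranch β j := (mem_betaBranch_iff hβ).2 hj
  have hjx : (j : ℝ) / β ≤ x := by exact_mod_cast hxj.1
  have hxj' : x ≤ (j + 1) / β := by exact_mod_cast hxj.2.le
  have hjβ : (j : ℝ) ≤ β := by
    have := Int.floor_le (β * x)
    rw [hj, Int.cast_natCast] at this
    nlinarith [hx.2]
  have hτ : betaMap β x = β * x - j := by exact_mod_cast betaMap_eqOn_betaBranch hβ j hxj
  rw [← measureReal_Ico_add_Ico (by positivity) hjx, mul_add,
    hm.mul_measureReal_Ico hβ hs j hxj' hx.2, hτ, hj, Int.cast_natCast,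
    mul_measureReal_Ico_zero_natCast_div hβ hm hs h1 hjβ]

lemma mul_measureReal_Ico_zero_sub (hβ : 0 < β) (hm : ScaledByIco (betaMap β) m s)
    (hs : 0 ≤ s) (h1 : m (Ico 0 1) = 1) {x : ℝ} (hx : x ∈ Icc 0 1) :
    s * (m.real (Ico 0 x) - x) =
      (β - s) * x + (m.real (Ico 0 (betaMap β x)) - betaMap β x) := by
  linear_combination hm.mul_measureReal_Ico_zero hβ hs h1 hx + floor_add_betaMap β x

end Finite

section Probability

variable [IsProbabilityMeasure m]

lemma one_lt (hβ : 1 < β) (hm : ScaledByIco (betaMap β) m s) (hs : 0 < s)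
    (h1 : m (Ico 0 1) = 1) : 1 < s := by
  have hβ0 : 0 < β := by linarith
  have hbranch : s * m.real (Ico 0 (1 / β)) = 1 := by
    simpa using
      hm.mul_measureReal_Ico_zero_natCast_div hβ0 hs.le h1 (j := 1) (by simpa using hβ.le)
  have hle : 1 ≤ s := by nlinarith [measureReal_le_one (μ := m) (s := Ico 0 (1 / β))]
  refine hle.lt_of_ne fun hs1 => ?_
  subst hs1
  have hzero : m {0} = 1 := measure_singleton_zero_eq_one hβ hm h1
  have hinv : m {0} = m {1 / β} := by
    have h := hm {1 / β} (singleton_subset_iff.2 ⟨by positivity, (div_lt_one hβ0).2 hβ⟩)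
      (measurableSet_singleton _) (injOn_singleton _ _)
    rwa [image_singleton, betaMap, mul_one_div_cancel hβ0.ne', Int.fract_one, ENNReal.ofReal_one,
      one_mul] at h
  have hne : (0 : ℝ) ≠ 1 / β := (one_div_pos.2 hβ0).ne
  have := prob_le_one (μ := m) (s := {0} ∪ {1 / β})
  rw [measure_union (disjoint_singleton.2 hne) (measurableSet_singleton _), ← hinv, hzero] at this
  norm_num at this

lemma measureReal_Ico_zero (hβ : 1 < β) (hm : ScaledByIco (betaMap β) m s) (hs : 0 < s)
    (h1 : m (Ico 0 1) = 1) {x : ℝ} (hx : x ∈ Icc 0 1) : m.real (Ico 0 x) = x := by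
  have hβ0 : 0 < β := by linarith
  have hs1 : 1 < s := hm.one_lt hβ hs h1
  have hrel := fun y (hy : y ∈ Icc (0 : ℝ) 1) => hm.mul_measureReal_Ico_zero_sub hβ0 hs.le h1 hy
  have hτ : MapsTo (betaMap β) (Icc 0 1) (Icc 0 1) :=
    fun x _ => Ico_subset_Icc_self (betaMap_mem_Ico β x)
  have hF : ∀ x, m.real (Ico 0 x) ≤ 1 := fun _ => measureReal_le_one
  have hle : β ≤ s → ∀ y ∈ Icc (0 : ℝ) 1, m.real (Ico 0 y) - y ≤ 0 := fun hsβ _ hy =>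
    nonpos_of_mul_le_comp (f := fun x => m.real (Ico 0 x) - x) hs1 hτ (C := 1)
      (fun x hx => by linarith [hF x, hx.1]) (fun x hx => by nlinarith [hrel x hx, hx.1]) hy
  have hge : s ≤ β → ∀ y ∈ Icc (0 : ℝ) 1, 0 ≤ m.real (Ico 0 y) - y := fun hsβ _ hy => by
    have := nonpos_of_mul_le_comp (f := fun x => -(m.real (Ico 0 x) - x)) hs1 hτ (C := 1)
      (fun x hx => by linarith [measureReal_nonneg (μ := m) (s := Ico 0 x), hx.2])
      (fun x hx => by nlinarith [hrel x hx, hx.1]) hy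
    linarith
  have hτ1 := hrel 1 ⟨zero_le_one, le_rfl⟩
  rw [measureReal_def, h1, ENNReal.toReal_one, sub_self, mul_zero, mul_one] at hτ1
  have hsβ : s = β := by
    rcases lt_trichotomy s β with h | h | h
    · linarith [hge h.le _ (hτ ⟨zero_le_one, le_rfl⟩)]
    · exact h
    · linarith [hle h.le _ (hτ ⟨zero_le_one, le_rfl⟩)]
  linarith [hle hsβ.ge x hx, hge hsβ.le x hx]

theorem eq_volume_restrict (hβ : 1 < β) (hm : ScaledByIco (betaMap β) m s) (hs : 0 < s)
    (h1 : m (Ico 0 1) = 1) : m = volume.restrict (Ico 0 1) :=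
  eq_volume_restrict_Ico_of_measureReal_Ico ((prob_compl_eq_zero_iff measurableSet_Ico).2 h1)
    fun _ hx => hm.measureReal_Ico_zero hβ hs h1 hx

end Probability

end ScaledByIco

/-- For every `β > 1`, Lebesgue measure on `[0,1)` is scaled by the
β-transformation by the factor `β`, and it is the unique Borel probability measure on `[0,1)`
scaled by the β-transformation by some factor `s > 0`. -/
theorem stmt14 (β : ℝ) (hβ : 1 < β) :
    ScaledByIco (betaMap β) (volume.restrict (Set.Ico (0 : ℝ) 1)) β ∧
    ∀ (m : Measure ℝ) (s : ℝ), 0 < s → IsProbabilityMeasure m →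
      m (Set.Ico (0 : ℝ) 1) = 1 → ScaledByIco (betaMap β) m s →
      m = volume.restrict (Set.Ico (0 : ℝ) 1) :=
  ⟨scaledByIco_volume (by linarith), fun _ _ hs _ h1 hm => hm.eq_volume_restrict hβ hs h1⟩
end
end

section
/- Let X be a compact subset of ℝ and let μ be a Borel probability measure on X with full support. If f : X → ℝ is continuous, g : X → ℝ has bounded variation, and f = g μ-almost everywhere, then Var_X(f) ≤ Var_X(g); in particular f has bounded variation. -/
/-!
The set `E` of points of `X` where `f = g` has full `μ`-measure in `X`, so full support makes it
dense in `X`. A sum defining `Var_X f` is then approximated by sums over points of `E`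
(continuity of `f`), and `f = g` on `E`, so `Var_X f = Var_E f = Var_E g ≤ Var_X g`.
-/

open Set MeasureTheory Filter Topology

theorem subset_closure_sep_of_ae_restrict {α : Type*} [TopologicalSpace α] [MeasurableSpace α]
    {μ : Measure α} {s : Set α} {p : α → Prop} (hs : MeasurableSet s)
    (hpos : ∀ U : Set α, IsOpen U → (U ∩ s).Nonempty → 0 < μ (U ∩ s))
    (hp : ∀ᵐ x ∂μ.restrict s, p x) : s ⊆ closure {x ∈ s | p x} := by
  intro x hx
  rw [mem_closure_iff]
  intro U hU hxU
  by_contra hempty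
  have hnull : μ (U ∩ s) = 0 := by
    rw [measure_eq_zero_iff_ae_notMem]
    filter_upwards [(ae_restrict_iff' hs).1 hp] with y hy hyUs
    exact hempty ⟨y, hyUs.1, hyUs.2, hy hyUs.2⟩
  exact (hpos U hU ⟨x, hxU, hx⟩).ne' hnull

theorem eVariationOn_eq_of_subset_closure {α E : Type*} [LinearOrder α] [TopologicalSpace α]
    [OrderClosedTopology α] [FrechetUrysohnSpace α] [PseudoEMetricSpace E] {f : α → E}
    {s t : Set α} (hf : ContinuousOn f s) (hts : t ⊆ s) (hst : s ⊆ closure t) :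
    eVariationOn f s = eVariationOn f t := by
  refine le_antisymm (iSup_le ?_) (eVariationOn.mono f hts)
  rintro ⟨n, u, hu, us⟩
  choose! w hwt hwlim using fun x (hx : x ∈ s) => mem_closure_iff_seq_limit.1 (hst hx)
  -- Equal points `u i = u j` are approximated by the same sequence, so monotonicity survives.
  have hmono : ∀ᶠ m in atTop, MonotoneOn (fun i => w (u i) m) (Iic n) := by
    have hpair : ∀ i j, i ≤ j → ∀ᶠ m in atTop, w (u i) m ≤ w (u j) m := by
      intro i j hij
      rcases (hu hij).eq_or_lt with heq | hlt
      · simp [heq]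
      · exact ((hwlim _ (us i)).eventually_lt (hwlim _ (us j)) hlt).mono fun m => le_of_lt
    filter_upwards [(eventually_all_finite (finite_Iic n)).2 fun i _ =>
      (eventually_all_finite (finite_Iic n)).2 fun j _ =>
        eventually_imp_distrib_left.2 (hpair i j)] with m hm using hm
  have hlim : Tendsto (fun m => ∑ i ∈ Finset.range n, edist (f (w (u (i + 1)) m)) (f (w (u i) m)))
      atTop (𝓝 (∑ i ∈ Finset.range n, edist (f (u (i + 1))) (f (u i)))) := by
    have hfw : ∀ i, Tendsto (fun m => f (w (u i) m)) atTop (𝓝 (f (u i))) := fun i =>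
      (hf _ (us i)).tendsto.comp (tendsto_nhdsWithin_iff.2
        ⟨hwlim _ (us i), .of_forall fun m => hts (hwt _ (us i) m)⟩)
    exact tendsto_finsetSum _ fun i _ => (hfw (i + 1)).edist (hfw i)
  exact le_of_tendsto hlim (hmono.mono fun m hm =>
    eVariationOn.sum_le_of_monotoneOn_Iic hm fun i _ => hwt _ (us i) m)

theorem stmt16_general (X : Set ℝ) (hX : IsCompact X)
    (μ : Measure ℝ)
    (hfull : ∀ U : Set ℝ, IsOpen U → (U ∩ X).Nonempty → 0 < μ (U ∩ X))
    (f g : ℝ → ℝ) (hf : ContinuousOn f X) (hg : BoundedVariationOn g X)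
    (hae : ∀ᵐ x ∂(μ.restrict X), f x = g x) :
    eVariationOn f X ≤ eVariationOn g X ∧ BoundedVariationOn f X := by
  have hdense : X ⊆ closure {x ∈ X | f x = g x} :=
    subset_closure_sep_of_ae_restrict hX.isClosed.measurableSet hfull hae
  have hvar : eVariationOn f X ≤ eVariationOn g X :=
    calc eVariationOn f X = eVariationOn f {x ∈ X | f x = g x} :=
          eVariationOn_eq_of_subset_closure hf (sep_subset _ _) hdense
      _ = eVariationOn g {x ∈ X | f x = g x} := eVariationOn.eq_of_eqOn fun _ hx => hx.2
      _ ≤ eVariationOn g X := eVariationOn.mono g (sep_subset _ _)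
  exact ⟨hvar, ne_top_of_le_ne_top hg hvar⟩

/-- If `X ⊆ ℝ` is compact, `μ` is a fully supported Borel probability
measure on `X`, `f` is continuous on `X`, `g` has bounded variation on `X`, and `f = g`
μ-a.e. on `X`, then `Var_X f ≤ Var_X g`; in particular `f` has bounded variation on `X`. -/
theorem stmt16 (X : Set ℝ) (hX : IsCompact X)
    (μ : Measure ℝ) (hprob : IsProbabilityMeasure μ) (hμX : μ X = 1)
    (hfull : ∀ U : Set ℝ, IsOpen U → (U ∩ X).Nonempty → 0 < μ (U ∩ X))
    (f g : ℝ → ℝ) (hf : ContinuousOn f X) (hg : BoundedVariationOn g X)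
    (hae : ∀ᵐ x ∂(μ.restrict X), f x = g x) :
    eVariationOn f X ≤ eVariationOn g X ∧ BoundedVariationOn f X :=
  stmt16_general X hX μ hfull f g hf hg hae
end

section
/- Let σ be a piecewise homeomorphism of a compact metric space X, with transfer operator 𝓛, let μ be a Borel probability measure on X, and let s > 0. Then ∫ (𝓛f) dμ = s·∫ f dμ for every continuous f : X → ℝ if and only if μ(σ(E)) = s·μ(E) for every Borel set E ⊆ X on which σ is injective. -/
open Set MeasureTheory

noncomputable section

/-- `σ` is a piecewise homeomorphism of the space `X`: a continuous open map such that `X`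
is partitioned into finitely many nonempty clopen sets on each of which `σ` is injective
(hence a homeomorphism onto its clopen image). -/
def PiecewiseHomeo {X : Type*} [TopologicalSpace X] (σ : X → X) : Prop :=
  Continuous σ ∧ IsOpenMap σ ∧ ∃ (n : ℕ) (J : Fin n → Set X),
    (∀ i, IsClopen (J i)) ∧ (∀ i, (J i).Nonempty) ∧
    (Pairwise fun i j => Disjoint (J i) (J j)) ∧
    (⋃ i, J i) = Set.univ ∧
    (∀ i, Set.InjOn σ (J i)) ∧ (∀ i, IsClopen (σ '' J i))

/-- The transfer operator `(𝓛 f)(x) = ∑_{σ y = x} f y` (a finite sum for a piecewise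
homeomorphism). -/
noncomputable def transfer {X : Type*} (σ : X → X) (f : X → ℝ) (x : X) : ℝ :=
  ∑ᶠ y ∈ {y | σ y = x}, f y

/-- For a piecewise homeomorphism `σ` of a compact metric space `X`, a
Borel probability measure `μ` and `s > 0`: `∫ 𝓛f dμ = s ∫ f dμ` for every continuous
`f : X → ℝ` iff `μ(σ(E)) = s·μ(E)` for every Borel set `E` on which `σ` is injective. -/
theorem stmt17 {X : Type*} [MetricSpace X] [CompactSpace X]
    [MeasurableSpace X] [BorelSpace X]
    (σ : X → X) (hσ : PiecewiseHomeo σ)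
    (μ : Measure X) (hprob : IsProbabilityMeasure μ) (s : ℝ) (hs : 0 < s) :
    (∀ f : X → ℝ, Continuous f → ∫ x, transfer σ f x ∂μ = s * ∫ x, f x ∂μ) ↔
    (∀ E : Set X, MeasurableSet E → Set.InjOn σ E →
      μ (σ '' E) = ENNReal.ofReal s * μ E) := by
  classical
  haveI := hprob
  obtain ⟨hc, -, n, J, hclop, hJne, hdisj, hcov, hinj, himclop⟩ := hσ
  haveI hX : Nonempty X := by
    by_contra h
    rw [not_nonempty_iff] at h
    have h1 : μ Set.univ = 1 := hprob.measure_univ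
    rw [Set.univ_eq_empty_iff.mpr h] at h1
    simp at h1
  set U : Fin n → Set X := fun i => σ '' J i with hUdef
  have hUm : ∀ i, MeasurableSet (U i) := fun i => (himclop i).isClosed.measurableSet
  set g : Fin n → X → X := fun i => Function.invFunOn σ (J i) with hgdef
  have hg1 : ∀ i x, x ∈ U i → g i x ∈ J i ∧ σ (g i x) = x := by
    rintro i x ⟨y, hy, rfl⟩
    exact ⟨Function.invFunOn_mem ⟨y, hy, rfl⟩, Function.invFunOn_eq ⟨y, hy, rfl⟩⟩
  have hgu : ∀ i x y, y ∈ J i → σ y = x → g i x = y := by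
    intro i x y hy hxy
    have hx : x ∈ U i := ⟨y, hy, hxy⟩
    exact hinj i (hg1 i x hx).1 hy (by rw [(hg1 i x hx).2, hxy])
  have hpre : ∀ i (B : Set X), g i ⁻¹' B ∩ U i = σ '' (B ∩ J i) := by
    intro i B
    ext x
    constructor
    · rintro ⟨hB, hx⟩
      exact ⟨g i x, ⟨hB, (hg1 i x hx).1⟩, (hg1 i x hx).2⟩
    · rintro ⟨y, ⟨hyB, hyJ⟩, rfl⟩
      refine ⟨?_, ⟨y, hyJ, rfl⟩⟩
      show g i (σ y) ∈ B
      rw [hgu i (σ y) y hyJ rfl]; exact hyB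
  have himg : ∀ i (B : Set X), MeasurableSet B → MeasurableSet (σ '' (B ∩ J i)) := by
    intro i B hB
    haveI : CompactSpace (J i) := isCompact_iff_compactSpace.mp ((hclop i).isClosed.isCompact)
    have hemb : MeasurableEmbedding ((J i).restrict σ) :=
      ((hc.comp continuous_subtype_val).isClosedEmbedding
        (Set.injOn_iff_injective.mp (hinj i))).measurableEmbedding
    have heq : σ '' (B ∩ J i) = (J i).restrict σ '' (Subtype.val ⁻¹' B) := by
      ext x
      constructor
      · rintro ⟨y, ⟨hyB, hyJ⟩, rfl⟩; exact ⟨⟨y, hyJ⟩, hyB, rfl⟩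
      · rintro ⟨⟨y, hyJ⟩, hyB, rfl⟩; exact ⟨y, ⟨hyB, hyJ⟩, rfl⟩
    rw [heq]
    exact hemb.measurableSet_image.mpr (measurable_subtype_coe hB)
  have hgm : ∀ i, Measurable (g i) := by
    intro i B hB
    have hsplit : g i ⁻¹' B = σ '' (B ∩ J i) ∪ (g i ⁻¹' B \ U i) := by
      rw [← hpre i B]
      ext x; by_cases hx : x ∈ U i <;> simp [hx]
    rw [hsplit]
    refine (himg i B hB).union ?_
    have hconst : ∀ x, x ∉ U i → ∀ x', x' ∉ U i → g i x = g i x' := by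
      intro x hx x' hx'
      have e1 : g i x = Classical.choice hX :=
        Function.invFunOn_neg (by rintro ⟨a, ha, hax⟩; exact hx ⟨a, ha, hax⟩)
      have e2 : g i x' = Classical.choice hX :=
        Function.invFunOn_neg (by rintro ⟨a, ha, hax⟩; exact hx' ⟨a, ha, hax⟩)
      rw [e1, e2]
    by_cases hD : (g i ⁻¹' B \ U i).Nonempty
    · obtain ⟨x₀, hx₀B, hx₀U⟩ := hD
      have hDeq : g i ⁻¹' B \ U i = (U i)ᶜ := by
        ext x
        simp only [Set.mem_diff, Set.mem_preimage, Set.mem_compl_iff]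
        refine ⟨fun hh => hh.2, fun hx => ⟨?_, hx⟩⟩
        rw [hconst x hx x₀ hx₀U]; exact hx₀B
      rw [hDeq]; exact (hUm i).compl
    · rw [Set.not_nonempty_iff_eq_empty.mp hD]; exact MeasurableSet.empty
  set ν : Measure X := ∑ i : Fin n, (μ.restrict (U i)).map (g i) with hνdef
  have hν : ∀ E : Set X, MeasurableSet E → ν E = ∑ i : Fin n, μ (σ '' (E ∩ J i)) := by
    intro E hE
    rw [hνdef, Measure.finset_sum_apply]
    refine Finset.sum_congr rfl fun i _ => ?_
    rw [Measure.map_apply (hgm i) hE, Measure.restrict_apply (hgm i hE), hpre i E]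
  have hEν : ∀ E : Set X, MeasurableSet E → Set.InjOn σ E → μ (σ '' E) = ν E := by
    intro E hE hEinj
    have hdecomp : σ '' E = ⋃ i, σ '' (E ∩ J i) := by
      rw [← Set.image_iUnion, ← Set.inter_iUnion, hcov, Set.inter_univ]
    have hd2 : Pairwise (Function.onFun Disjoint fun i => σ '' (E ∩ J i)) := by
      intro i j hij
      refine Set.disjoint_left.mpr ?_
      rintro x ⟨a, ⟨haE, haJ⟩, rfl⟩ ⟨b, ⟨hbE, hbJ⟩, hba⟩
      have hba' : b = a := hEinj hbE haE hba
      exact Set.disjoint_left.mp (hdisj hij) haJ (hba' ▸ hbJ)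
    rw [hdecomp, measure_iUnion hd2 (fun i => himg i E hE), tsum_fintype, hν E hE]
  have htrans : ∀ (f : X → ℝ) (x : X),
      transfer σ f x = ∑ i : Fin n, if x ∈ U i then f (g i x) else 0 := by
    intro f x
    have hset : {y | σ y = x} = ⋃ i, {y | y ∈ J i ∧ σ y = x} := by
      ext y
      simp only [Set.mem_setOf_eq, Set.mem_iUnion]
      constructor
      · intro hy
        have hy2 : y ∈ ⋃ i, J i := hcov ▸ Set.mem_univ y
        obtain ⟨i, hi⟩ := Set.mem_iUnion.mp hy2
        exact ⟨i, hi, hy⟩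
      · rintro ⟨i, -, hy⟩; exact hy
    have hdisj2 : Pairwise (Function.onFun Disjoint fun i => {y | y ∈ J i ∧ σ y = x}) := by
      intro i j hij
      exact Set.disjoint_left.mpr fun y hy hy' => Set.disjoint_left.mp (hdisj hij) hy.1 hy'.1
    have hfin : ∀ i, {y | y ∈ J i ∧ σ y = x}.Finite := by
      intro i
      apply Set.Subsingleton.finite
      rintro a ⟨haJ, hax⟩ b ⟨hbJ, hbx⟩
      exact hinj i haJ hbJ (by rw [hax, hbx])
    show (∑ᶠ y ∈ {y | σ y = x}, f y) = _
    rw [hset, finsum_mem_iUnion hdisj2 hfin, finsum_eq_sum_of_fintype]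
    refine Finset.sum_congr rfl fun i _ => ?_
    by_cases hx : x ∈ U i
    · have hsing : {y | y ∈ J i ∧ σ y = x} = {g i x} := by
        ext y
        simp only [Set.mem_setOf_eq, Set.mem_singleton_iff]
        constructor
        · rintro ⟨hyJ, hyx⟩; exact (hgu i x y hyJ hyx).symm
        · rintro rfl; exact ⟨(hg1 i x hx).1, (hg1 i x hx).2⟩
      rw [hsing, finsum_mem_singleton, if_pos hx]
    · have hemp : {y | y ∈ J i ∧ σ y = x} = ∅ := by
        ext y
        simp only [Set.mem_setOf_eq, Set.mem_empty_iff_false, iff_false, not_and]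
        intro hyJ hyx
        exact hx ⟨y, hyJ, hyx⟩
      rw [hemp, finsum_mem_empty, if_neg hx]
  have hbound : ∀ (f : X → ℝ), Continuous f → ∃ C : ℝ, ∀ x, ‖f x‖ ≤ C := by
    intro f hf
    obtain ⟨C, hC⟩ := isCompact_univ.exists_bound_of_continuousOn hf.continuousOn
    exact ⟨C, fun x => hC x (Set.mem_univ x)⟩
  have hmapfin : ∀ i, IsFiniteMeasure ((μ.restrict (U i)).map (g i)) := by
    intro i
    constructor
    rw [Measure.map_apply (hgm i) MeasurableSet.univ]
    exact measure_lt_top _ _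
  haveI hνfin : IsFiniteMeasure ν := by
    constructor
    rw [hνdef, Measure.finset_sum_apply]
    refine ENNReal.sum_lt_top.mpr fun i _ => ?_
    haveI := hmapfin i
    exact measure_lt_top _ _
  have hint : ∀ (f : X → ℝ), Continuous f →
      ∫ x, transfer σ f x ∂μ = ∫ x, f x ∂ν := by
    intro f hf
    obtain ⟨C, hC⟩ := hbound f hf
    have hfgint : ∀ i, Integrable (fun x => f (g i x)) μ := by
      intro i
      refine (integrable_const C).mono'
        ((hf.measurable.comp (hgm i)).aestronglyMeasurable) ?_
      exact Filter.Eventually.of_forall fun x => hC _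
    have hintν : ∀ i, Integrable f ((μ.restrict (U i)).map (g i)) := by
      intro i
      haveI := hmapfin i
      refine (integrable_const C).mono' hf.aestronglyMeasurable ?_
      exact Filter.Eventually.of_forall fun x => hC _
    rw [hνdef, integral_finset_sum_measure (fun i _ => hintν i)]
    have hptwise : ∀ x, transfer σ f x
        = ∑ i : Fin n, (U i).indicator (fun y => f (g i y)) x := by
      intro x
      rw [htrans f x]
      refine Finset.sum_congr rfl fun i _ => ?_
      by_cases hx : x ∈ U i <;> simp [Set.indicator_apply, hx]
    rw [integral_congr_ae (Filter.Eventually.of_forall hptwise),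
      integral_finset_sum _ (fun i _ => ((hfgint i).indicator (hUm i)))]
    refine Finset.sum_congr rfl fun i _ => ?_
    rw [integral_indicator (hUm i),
      integral_map (hgm i).aemeasurable hf.aestronglyMeasurable]
  have hsfin : ENNReal.ofReal s ≠ ⊤ := ENNReal.ofReal_ne_top
  constructor
  · intro h E hE hEinj
    have hνeq : ν = ENNReal.ofReal s • μ := by
      haveI : IsFiniteMeasure (ENNReal.ofReal s • μ) := by
        constructor
        rw [Measure.smul_apply, smul_eq_mul]
        exact ENNReal.mul_lt_top hsfin.lt_top (measure_lt_top μ _)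
      apply ext_of_forall_lintegral_eq_of_IsFiniteMeasure
      intro f0
      have hf : Continuous (fun x => (f0 x : ℝ)) :=
        NNReal.continuous_coe.comp f0.continuous
      obtain ⟨C, hC⟩ := hbound _ hf
      have hi1 : Integrable (fun x => (f0 x : ℝ)) ν := by
        refine (integrable_const C).mono' hf.aestronglyMeasurable ?_
        exact Filter.Eventually.of_forall fun x => hC _
      have hi2 : Integrable (fun x => (f0 x : ℝ)) (ENNReal.ofReal s • μ) := by
        refine (integrable_const C).mono' hf.aestronglyMeasurable ?_
        exact Filter.Eventually.of_forall fun x => hC _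
      have h1 : ∫ x, (f0 x : ℝ) ∂ν = s * ∫ x, (f0 x : ℝ) ∂μ := by
        rw [← hint _ hf]; exact h _ hf
      have h2 : ∫ x, (f0 x : ℝ) ∂(ENNReal.ofReal s • μ) = s * ∫ x, (f0 x : ℝ) ∂μ := by
        rw [integral_smul_measure, ENNReal.toReal_ofReal hs.le, smul_eq_mul]
      rw [lintegral_coe_eq_integral _ hi1, lintegral_coe_eq_integral _ hi2, h1, h2]
    rw [hEν E hE hEinj, hνeq, Measure.smul_apply, smul_eq_mul]
  · intro h f hf
    have hνeq : ν = ENNReal.ofReal s • μ := by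
      refine Measure.ext fun E hE => ?_
      rw [hν E hE, Measure.smul_apply, smul_eq_mul]
      have h1 : ∀ i, μ (σ '' (E ∩ J i)) = ENNReal.ofReal s * μ (E ∩ J i) := fun i =>
        h (E ∩ J i) (hE.inter (hclop i).isClosed.measurableSet)
          ((hinj i).mono Set.inter_subset_right)
      have h2 : μ E = ∑ i : Fin n, μ (E ∩ J i) := by
        have hEdec : E = ⋃ i, E ∩ J i := by
          rw [← Set.inter_iUnion, hcov, Set.inter_univ]
        have hd3 : Pairwise (Function.onFun Disjoint fun i => E ∩ J i) := fun i j hij =>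
          (hdisj hij).mono Set.inter_subset_right Set.inter_subset_right
        conv_lhs => rw [hEdec]
        rw [measure_iUnion hd3 (fun i => hE.inter (hclop i).isClosed.measurableSet),
          tsum_fintype]
      simp_rw [h1]
      rw [← Finset.mul_sum, h2]
    rw [hint f hf, hνeq, integral_smul_measure, ENNReal.toReal_ofReal hs.le, smul_eq_mul]
end
end
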